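/- arXiv:math/0403337 — 6 statements merged into one kernel-verified Lean document; each statement's English description precedes it below -/
import Mathlib

section
/- Let m ≥ 0 and r ≥ 1 be integers and let (N_1,…,N_r), with N_i = [l_i, g_i] ⊆ {1,…,m+r}, be a lattice path presentation. A set B ⊆ {1,…,m+r} is a maximal partial transversal of (N_1,…,N_r) (i.e., a basis of the lattice path matroid M[N]) if and only if |B| = r and, writing B = {b_1 < b_2 < ⋯ < b_r}, one has b_i ∈ N_i for every i with 1 ≤ i ≤ r. -/
open Set
open scoped Matroid

namespace LPM

variable {α β : Type*}

/-- `I` is a partial transversal of the set family `N`: there is an injection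
matching each element of `I` to an index of a member of the family containing it. -/
def IsPT {ι : Type*} (N : ι → Set α) (I : Set α) : Prop :=
  ∃ f : I → ι, Function.Injective f ∧ ∀ x : I, (x : α) ∈ N (f x)

/-- `I` is a (full) transversal of the set family `N`: there is a bijection
matching each element of `I` to an index of a member of the family containing it. -/
def IsT {ι : Type*} (N : ι → Set α) (I : Set α) : Prop :=
  ∃ f : I → ι, Function.Bijective f ∧ ∀ x : I, (x : α) ∈ N (f x)

/-- A lattice path presentation with nullity `m` and rank `r`: a sequence of
intervals `[l i, g i] ⊆ {1, …, m + r}` whose left endpoints strictly increase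
and whose right endpoints strictly increase. -/
structure LPP (m r : ℕ) where
  l : Fin r → ℕ
  g : Fin r → ℕ
  l_strictMono : StrictMono l
  g_strictMono : StrictMono g
  one_le_l : ∀ i, 1 ≤ l i
  l_le_g : ∀ i, l i ≤ g i
  g_le : ∀ i, g i ≤ m + r

/-- The intervals of a lattice path presentation. -/
def LPP.N {m r : ℕ} (P : LPP m r) (i : Fin r) : Set ℕ := Set.Icc (P.l i) (P.g i)

/-- `M` is the lattice path matroid `M[N]` of the presentation `P`: the ground set
is `{1, …, m + r}` and the independent sets are exactly the partial transversals
of the intervals of `P`. -/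
def IsLPMOf {m r : ℕ} (P : LPP m r) (M : Matroid ℕ) : Prop :=
  M.E = Set.Icc 1 (m + r) ∧
    ∀ I : Set ℕ, M.Indep I ↔ I ⊆ Set.Icc 1 (m + r) ∧ IsPT P.N I

/-- `M` is isomorphic to `M'`: there is a bijection between the ground sets
carrying independent sets to independent sets in both directions. -/
def IsoTo (M : Matroid α) (M' : Matroid β) : Prop :=
  ∃ f : α → β, Set.BijOn f M.E M'.E ∧ ∀ I ⊆ M.E, (M.Indep I ↔ M'.Indep (f '' I))

/-- A lattice path matroid: a matroid isomorphic to `M[N]` for some lattice path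
presentation (presentations with `r = 0` give the rank-zero matroids). -/
def IsLPMatroid (M : Matroid α) : Prop :=
  ∃ (m r : ℕ) (P : LPP m r) (M₀ : Matroid ℕ), IsLPMOf P M₀ ∧ IsoTo M M₀

/-- A circuit of a matroid: a minimal dependent subset of the ground set. -/
def Circuit (M : Matroid α) (C : Set α) : Prop :=
  C ⊆ M.E ∧ ¬ M.Indep C ∧ ∀ D : Set α, D ⊂ C → M.Indep D

/-- A matroid is connected if every two distinct elements of the ground set lie
in a common circuit. -/
def Connected (M : Matroid α) : Prop :=
  ∀ x ∈ M.E, ∀ y ∈ M.E, x ≠ y → ∃ C, Circuit M C ∧ x ∈ C ∧ y ∈ C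

/-- The rank of a set in a matroid: the supremum of the cardinalities of its
independent subsets. -/
noncomputable def rk (M : Matroid α) (X : Set α) : ℕ :=
  sSup {n | ∃ I, I ⊆ X ∧ M.Indep I ∧ I.ncard = n}

/-- A nontrivial connected flat: a flat that is dependent and whose restriction
is a connected matroid. -/
def NTConnFlat (M : Matroid α) (X : Set α) : Prop :=
  M.IsFlat X ∧ ¬ M.Indep X ∧ Connected (M ↾ X)

/-- Deletion of a set from a matroid. -/
def delete (M : Matroid α) (D : Set α) : Matroid α := M ↾ (M.E \ D)

/-- Contraction of a set in a matroid, defined via duality. -/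
def contract (M : Matroid α) (C : Set α) : Matroid α := (delete M✶ C)✶

/-- `Minor M' M` means that `M'` is obtained from `M` by a sequence of deletions
and contractions. -/
inductive Minor : Matroid α → Matroid α → Prop
  | refl (M : Matroid α) : Minor M M
  | del {M' M : Matroid α} (D : Set α) (h : Minor M' M) : Minor (delete M' D) M
  | con {M' M : Matroid α} (C : Set α) (h : Minor M' M) : Minor (contract M' C) M

end LPM

/-!
Matching the sorted elements `b 0 < ⋯ < b (r-1)` of a basis to the intervals gives a
permutation `σ` of `Fin r` with `b j ∈ N (σ j)`. By counting, some `t ≤ i` has `σ t ≥ i`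
and some `s ≥ i` has `σ s ≤ i`; monotonicity of the endpoints then squeezes `b i` into `N i`:
`l i ≤ l (σ t) ≤ b t ≤ b i ≤ b s ≤ g (σ s) ≤ g i`. Conversely the identity matching shows that
such a `B` is independent, and the left endpoints show that the rank is `r`.
-/

open Function

namespace Fin

variable {r : ℕ} {σ : Fin r → Fin r}

theorem exists_le_le_apply_of_injective (hσ : Injective σ) (i : Fin r) :
    ∃ t ≤ i, i ≤ σ t := by
  by_contra! h
  have hmaps : ∀ t ∈ Finset.Iic i, σ t ∈ Finset.Iio i := fun t ht =>
    Finset.mem_Iio.mpr (h t (Finset.mem_Iic.mp ht))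
  have := Finset.card_le_card_of_injOn σ hmaps hσ.injOn
  rw [Fin.card_Iic, Fin.card_Iio] at this
  omega

theorem exists_ge_apply_le_of_injective (hσ : Injective σ) (i : Fin r) :
    ∃ s ≥ i, σ s ≤ i := by
  by_contra! h
  have hmaps : ∀ s ∈ Finset.Ici i, σ s ∈ Finset.Ioi i := fun s hs =>
    Finset.mem_Ioi.mpr (h s (Finset.mem_Ici.mp hs))
  have := Finset.card_le_card_of_injOn σ hmaps hσ.injOn
  rw [Fin.card_Ici, Fin.card_Ioi] at this
  omega

end Fin

theorem mem_Icc_of_injective_of_mem_Icc {α : Type*} [Preorder α] {r : ℕ} {l g b : Fin r → α}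
    (hl : Monotone l) (hg : Monotone g) (hb : Monotone b) {σ : Fin r → Fin r}
    (hσ : Injective σ) (hmem : ∀ j, b j ∈ Icc (l (σ j)) (g (σ j))) (i : Fin r) :
    b i ∈ Icc (l i) (g i) := by
  obtain ⟨t, hti, hiσt⟩ := Fin.exists_le_le_apply_of_injective hσ i
  obtain ⟨s, his, hσsi⟩ := Fin.exists_ge_apply_le_of_injective hσ i
  constructor
  · calc l i ≤ l (σ t) := hl hiσt
      _ ≤ b t := (hmem t).1
      _ ≤ b i := hb hti
  · calc b i ≤ b s := hb his
      _ ≤ g (σ s) := (hmem s).2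
      _ ≤ g i := hg hσsi

theorem exists_strictMono_eq_range_of_ncard_eq {α : Type*} [LinearOrder α] {B : Set α} {n : ℕ}
    (hn : n ≠ 0) (hB : B.ncard = n) : ∃ b : Fin n → α, StrictMono b ∧ B = range b := by
  have hfin : B.Finite := finite_of_ncard_ne_zero (hB ▸ hn)
  have hcard : hfin.toFinset.card = n := by rwa [← ncard_eq_toFinset_card B hfin]
  refine ⟨hfin.toFinset.orderEmbOfFin hcard, (hfin.toFinset.orderEmbOfFin hcard).strictMono, ?_⟩
  rw [Finset.range_orderEmbOfFin, Finite.coe_toFinset]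

namespace LPM

section IsPT

variable {α ι : Type*} {N : ι → Set α} {I : Set α}

theorem IsPT.finite [Finite ι] (h : IsPT N I) : I.Finite := by
  obtain ⟨f, hf, -⟩ := h
  have : Finite I := Finite.of_injective f hf
  exact toFinite I

theorem IsPT.ncard_le [Finite ι] (h : IsPT N I) : I.ncard ≤ Nat.card ι := by
  obtain ⟨f, hf, -⟩ := h
  rw [← Nat.card_coe_set_eq]
  exact Nat.card_le_card_of_injective f hf

theorem isPT_range {b : ι → α} (h : ∀ i, b i ∈ N i) : IsPT N (range b) :=
  ⟨rangeSplitting b, rangeSplitting_injective b, fun x => by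
    simpa only [apply_rangeSplitting] using h (rangeSplitting b x)⟩

theorem IsPT.mem_Icc_of_range [Preorder α] {r : ℕ} {l g b : Fin r → α}
    (hl : Monotone l) (hg : Monotone g) (hb : StrictMono b)
    (h : IsPT (fun i => Icc (l i) (g i)) (range b)) (i : Fin r) : b i ∈ Icc (l i) (g i) := by
  obtain ⟨f, hf, hmem⟩ := h
  exact mem_Icc_of_injective_of_mem_Icc hl hg hb.monotone (σ := fun j => f ⟨b j, j, rfl⟩)
    (fun j k hjk => hb.injective (congrArg Subtype.val (hf hjk))) (fun j => hmem _) i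

end IsPT

namespace IsLPMOf

variable {m r : ℕ} {P : LPP m r} {M : Matroid ℕ}

theorem finite_of_indep (hM : IsLPMOf P M) {I : Set ℕ} (hI : M.Indep I) : I.Finite :=
  ((hM.2 I).1 hI).2.finite

theorem ncard_le_of_indep (hM : IsLPMOf P M) {I : Set ℕ} (hI : M.Indep I) : I.ncard ≤ r := by
  simpa using ((hM.2 I).1 hI).2.ncard_le

theorem indep_range (hM : IsLPMOf P M) {b : Fin r → ℕ} (h : ∀ i, b i ∈ P.N i) :
    M.Indep (range b) := by
  refine (hM.2 _).2 ⟨?_, isPT_range h⟩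
  rintro _ ⟨i, rfl⟩
  exact ⟨(P.one_le_l i).trans (h i).1, (h i).2.trans (P.g_le i)⟩

theorem ncard_eq_of_isBase (hM : IsLPMOf P M) {B : Set ℕ} (hB : M.IsBase B) : B.ncard = r := by
  have hl : M.Indep (range P.l) := hM.indep_range fun i => ⟨le_rfl, P.l_le_g i⟩
  obtain ⟨B', hB', hlB'⟩ := hl.exists_isBase_superset
  have hr : r ≤ B'.ncard := by
    simpa [ncard_range_of_injective P.l_strictMono.injective] using
      ncard_le_ncard hlB' (hM.finite_of_indep hB'.indep)
  rw [hB.ncard_eq_ncard_of_isBase hB']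
  exact (hM.ncard_le_of_indep hB'.indep).antisymm hr

theorem isBase_of_indep_of_ncard_eq (hM : IsLPMOf P M) {B : Set ℕ} (hB : M.Indep B)
    (hcard : B.ncard = r) : M.IsBase B :=
  hB.isBase_of_maximal fun _ hJ hBJ =>
    eq_of_subset_of_ncard_le hBJ (hcard ▸ hM.ncard_le_of_indep hJ) (hM.finite_of_indep hJ)

end IsLPMOf

end LPM

open LPM in
/-- For a lattice path presentation `P` with `m ≥ 0`, `r ≥ 1`,
a set `B ⊆ {1,…,m+r}` is a basis of the lattice path matroid `M[N]` iff
`|B| = r` and, writing `B = {b 0 < b 1 < ⋯}`, `b i ∈ N i` for every `i`. -/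
theorem stmt0 {m r : ℕ} (hr : 1 ≤ r) (P : LPP m r) (M : Matroid ℕ)
    (hM : IsLPMOf P M) (B : Set ℕ) :
    M.IsBase B ↔
      (B.ncard = r ∧
        ∀ b : Fin r → ℕ, StrictMono b → B = Set.range b → ∀ i : Fin r, b i ∈ P.N i) := by
  constructor
  · intro hB
    refine ⟨hM.ncard_eq_of_isBase hB, fun b hb hBb => ?_⟩
    subst hBb
    exact ((hM.2 _).1 hB.indep).2.mem_Icc_of_range
      P.l_strictMono.monotone P.g_strictMono.monotone hb
  · rintro ⟨hcard, hmem⟩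
    obtain ⟨b, hb, rfl⟩ := exists_strictMono_eq_range_of_ncard_eq (by omega) hcard
    exact hM.isBase_of_indep_of_ncard_eq (hM.indep_range (hmem b hb rfl)) hcard
end

section
/- Let (D_1,…,D_k) be a finite family of subsets of a finite set E, let M be the transversal matroid on E presented by this family (independent sets are the partial transversals), and let r be the rank of M. Suppose some basis B of M is a transversal of the subfamily (D_{i_1},…,D_{i_r}) with i_1 < i_2 < ⋯ < i_r, i.e., there is a bijection f : B → {i_1,…,i_r} with x ∈ D_{f(x)} for all x ∈ B. Then the subfamily presents the same matroid: a subset of E is a partial transversal of (D_1,…,D_k) if and only if it is a partial transversal of (D_{i_1},…,D_{i_r}). -/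
open Set
open scoped Matroid

/-! By Hall's theorem it suffices that any finite set `s` of elements of a partial transversal
`I` of the whole family meets at least `|s|` sets of the subfamily; let `J` index those sets.
Otherwise, match `s` as within `I` and add the elements of `B` matched to indices outside `J`.
No element of `s` lies in a set indexed outside `J`, so the two matchings combine into a partial
transversal with `|s| + r - |J| > r` elements, which exceeds the rank. -/

namespace LPM

open Function

variable {α ι κ : Type*} {N : κ → Set α}

theorem IsPT.of_comp {e : ι → κ} (he : Injective e) {I : Set α}
    (hI : IsPT (fun j => N (e j)) I) : IsPT N I :=
  let ⟨f, hf, hfN⟩ := hI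
  ⟨e ∘ f, he.comp hf, hfN⟩

theorem isPT_union {S T : Set α} (hST : Disjoint S T) {f : S → κ} {g : T → κ}
    (hf : Injective f) (hg : Injective g) (hfg : ∀ a b, f a ≠ g b)
    (hfN : ∀ x, (x : α) ∈ N (f x)) (hgN : ∀ x, (x : α) ∈ N (g x)) : IsPT N (S ∪ T) := by
  classical
  refine ⟨Sum.elim f g ∘ Equiv.Set.union hST,
    (hf.sumElim hg hfg).comp (Equiv.injective _), ?_⟩
  rw [(Equiv.Set.union hST).symm.surjective.forall]
  rintro (x | x) <;> rw [comp_apply, Equiv.apply_symm_apply]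
  · simpa only [Sum.elim_inl, Equiv.Set.union_symm_apply_left] using hfN x
  · simpa only [Sum.elim_inr, Equiv.Set.union_symm_apply_right] using hgN x

theorem ncard_le_rk {M : Matroid α} {X S : Set α} (hX : X.Finite) (hSX : S ⊆ X)
    (hS : M.Indep S) : S.ncard ≤ rk M X :=
  le_csSup ⟨X.ncard, by rintro _ ⟨T, hTX, -, rfl⟩; exact ncard_le_ncard hTX hX⟩
    ⟨S, hSX, hS, rfl⟩

theorem card_le_card_of_isT_of_isPT [Fintype ι] {e : ι → κ} (he : Injective e) {B I : Set α}
    (hB : IsT (fun j => N (e j)) B) (hI : IsPT N I)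
    (hmax : ∀ U ⊆ I ∪ B, IsPT N U → U.ncard ≤ Fintype.card ι)
    {s : Finset I} {J : Finset ι} (hsJ : ∀ x ∈ s, ∀ j, (x : α) ∈ N (e j) → j ∈ J) :
    s.card ≤ J.card := by
  classical
  obtain ⟨f, hf, hfN⟩ := hI
  obtain ⟨h, hh, hhN⟩ := hB
  set S : Set α := (↑) '' (s : Set I)
  set T : Set α := (↑) '' (h ⁻¹' ↑Jᶜ)
  have hSI : S ⊆ I := Subtype.coe_image_subset _ _
  have hTB : T ⊆ B := Subtype.coe_image_subset _ _
  have hTJ : ∀ b : T, h (inclusion hTB b) ∉ J := by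
    rintro ⟨_, b, hb, rfl⟩
    simpa using hb
  have hSJ : ∀ a : S, ∀ j, (a : α) ∈ N (e j) → j ∈ J := by
    rintro ⟨_, a, ha, rfl⟩
    exact hsJ a ha
  have hST : Disjoint S T :=
    Set.disjoint_left.mpr fun x hxS hxT => hTJ ⟨x, hxT⟩ (hSJ ⟨x, hxS⟩ _ (hhN _))
  have hU : IsPT N (S ∪ T) :=
    isPT_union hST (f := f ∘ inclusion hSI) (g := e ∘ h ∘ inclusion hTB)
      (hf.comp (inclusion_injective hSI)) (he.comp (hh.injective.comp (inclusion_injective hTB)))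
      (fun a b hab => hTJ b (hSJ a _ (by
        rw [← show f (inclusion hSI a) = e (h (inclusion hTB b)) from hab]; exact hfN _)))
      (fun a => hfN _) (fun b => hhN _)
  have : Finite B := Finite.of_injective h hh.injective
  have hcard : (S ∪ T).ncard = s.card + (Fintype.card ι - J.card) := by
    rw [ncard_union_eq hST, ncard_image_of_injective _ Subtype.val_injective,
      ncard_image_of_injective _ Subtype.val_injective,
      ncard_preimage_of_injective_subset_range hh.injective (by simp [hh.surjective.range_eq]),
      ncard_coe_finset, ncard_coe_finset, Finset.card_compl]
  have hUle := hmax _ (union_subset_union hSI hTB) hU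
  have hJle := J.card_le_univ
  omega

theorem IsPT.comp_of_isT [Fintype ι] {e : ι → κ} (he : Injective e) {B I : Set α}
    (hB : IsT (fun j => N (e j)) B) (hI : IsPT N I)
    (hmax : ∀ U ⊆ I ∪ B, IsPT N U → U.ncard ≤ Fintype.card ι) :
    IsPT (fun j => N (e j)) I := by
  classical
  obtain ⟨g, hg, hgN⟩ := (Finset.all_card_le_biUnion_card_iff_exists_injective
    fun x : I => {j | (x : α) ∈ N (e j)}).mp fun s =>
      card_le_card_of_isT_of_isPT he hB hI hmax fun x hx j hj =>
        Finset.mem_biUnion.mpr ⟨x, hx, by simpa using hj⟩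
  exact ⟨g, hg, fun x => by simpa using hgN x⟩

end LPM

open LPM in
theorem stmt1_general {α : Type*} {k : ℕ} (E : Set α) (hEfin : E.Finite)
    (D : Fin k → Set α)
    (M : Matroid α) (hME : M.E = E)
    (hMI : ∀ I : Set α, M.Indep I ↔ I ⊆ E ∧ IsPT D I)
    (r : ℕ) (hr : rk M M.E = r)
    (B : Set α) (hB : M.IsBase B)
    (ι : Fin r → Fin k) (hι : StrictMono ι)
    (hBT : IsT (fun j => D (ι j)) B) :
    ∀ I : Set α, I ⊆ E → (IsPT D I ↔ IsPT (fun j => D (ι j)) I) := by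
  intro I hIE
  refine ⟨fun hI => hI.comp_of_isT hι.injective hBT fun U hU hUN => ?_, IsPT.of_comp hι.injective⟩
  have hUE : U ⊆ E := hU.trans (union_subset hIE (hME ▸ hB.subset_ground))
  rw [Fintype.card_fin, ← hr, hME]
  exact ncard_le_rk hEfin hUE ((hMI U).mpr ⟨hUE, hUN⟩)

open LPM in
/-- If a basis `B` of the transversal matroid presented by
`(D 0, …, D (k-1))` is a transversal of the subfamily indexed by the strictly
increasing `ι : Fin r → Fin k`, where `r` is the rank of the matroid, then the
subfamily presents the same matroid: a subset of `E` is a partial transversal of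
the whole family iff it is one of the subfamily. -/
theorem stmt1 {α : Type*} {k : ℕ} (E : Set α) (hEfin : E.Finite)
    (D : Fin k → Set α) (hDE : ∀ i, D i ⊆ E)
    (M : Matroid α) (hME : M.E = E)
    (hMI : ∀ I : Set α, M.Indep I ↔ I ⊆ E ∧ IsPT D I)
    (r : ℕ) (hr : rk M M.E = r)
    (B : Set α) (hB : M.IsBase B)
    (ι : Fin r → Fin k) (hι : StrictMono ι)
    (hBT : IsT (fun j => D (ι j)) B) :
    ∀ I : Set α, I ⊆ E → (IsPT D I ↔ IsPT (fun j => D (ι j)) I) :=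
  stmt1_general E hEfin D M hME hMI r hr B hB ι hι hBT
end

section
/- Let M be a connected finite matroid with at least two elements and let x be an element of M that is not parallel to any other element (no 2-element circuit of M contains x). If the contraction M/x is disconnected, then there exist nontrivial connected flats A and B of M that are incomparable (neither contains the other) such that r(A) + r(B) = r(M) + 1 and A ∩ B = {x}. -/
open Set
open scoped Matroid

/-!
Let `(S, T)` be a separation of `M ／ {x}` and put `A = S ∪ {x}`, `B = T ∪ {x}`. Every circuit
of `M` through `x` becomes a circuit of `M ／ {x}` after deleting `x`, so it stays inside `A` or
inside `B`; since `M` is connected, this joins `x` to every element of `S` by a circuit inside `A`,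
and the transitivity of "lying in a common circuit" makes `M ↾ A` connected. An element of `T` in
the closure of `A` would be a loop of `M ／ {x}`, i.e. a loop of `M` or parallel to `x`, so `A` is
a flat. For the ranks, bases of `S` and `T` in `M ／ {x}` together with `x` are independent in `M`,
giving `r(A) + r(B) ≤ r(M) + 1`, and submodularity gives the reverse inequality.
-/

lemma Set.ncard_lt_ncard_of_subset_sdiff_singleton {α : Type*} {s t : Set α} {a : α}
    (hst : s ⊆ t \ {a}) (ha : a ∈ t) (ht : t.Finite) : s.ncard < t.ncard :=
  (ncard_le_ncard hst ht.sdiff).trans_lt (ncard_sdiff_singleton_lt_of_mem ha ht)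

namespace Matroid

variable {α : Type*} {M : Matroid α} {C C₁ C₂ I J S T : Set α} {a e f g x : α}

lemma IsCircuit.exists_isCircuit_inter_sdiff_nonempty (hC₁ : M.IsCircuit C₁)
    (hC₂ : M.IsCircuit C₂) (hg₁ : g ∈ C₁) (hg₂ : g ∈ C₂) (he₁ : e ∈ C₁) (he₂ : e ∉ C₂) :
    ∃ C ⊆ (C₁ ∪ C₂) \ {g}, M.IsCircuit C ∧ e ∈ C ∧ (C ∩ (C₂ \ C₁)).Nonempty := by
  obtain ⟨C, hCU, hC, heC⟩ := hC₁.strong_elimination hC₂ hg₁ hg₂ he₁ he₂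
  refine ⟨C, hCU, hC, heC, ?_⟩
  by_contra hempty
  have hCC₁ : C ⊆ C₁ := fun y hy ↦
    by_contra fun hy₁ ↦ hempty ⟨y, hy, (hCU hy).1.resolve_left hy₁, hy₁⟩
  exact (hCU (hC.eq_of_subset_isCircuit hC₁ hCC₁ ▸ hg₁)).2 rfl

/-- Eliminating a common element `g` from `C₁` and `C₂` in both directions gives circuits `C₃ ∋ e`
and `C₄ ∋ f` inside `(C₁ ∪ C₂) \ {g}`; if they are disjoint, `C₃` misses an element of `C₁ \ C₂`
and replaces `C₁`. Either way the union shrinks. -/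
theorem IsCircuit.exists_isCircuit_mem_mem [M.Finitary] (hC₁ : M.IsCircuit C₁)
    (hC₂ : M.IsCircuit C₂) (hC₁₂ : (C₁ ∩ C₂).Nonempty) (he : e ∈ C₁) (hf : f ∈ C₂) :
    ∃ C, M.IsCircuit C ∧ e ∈ C ∧ f ∈ C := by
  induction hn : (C₁ ∪ C₂).ncard using Nat.strong_induction_on generalizing C₁ C₂ with
  | _ n ih =>
  subst hn
  by_cases heC₂ : e ∈ C₂
  · exact ⟨C₂, hC₂, heC₂, hf⟩
  by_cases hfC₁ : f ∈ C₁
  · exact ⟨C₁, hC₁, he, hfC₁⟩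
  obtain ⟨g, hg₁, hg₂⟩ := hC₁₂
  have hfin : (C₁ ∪ C₂).Finite := hC₁.finite.union hC₂.finite
  obtain ⟨C₃, hC₃U, hC₃, heC₃, h, hhC₃, hhC₂, hhC₁⟩ :=
    hC₁.exists_isCircuit_inter_sdiff_nonempty hC₂ hg₁ hg₂ he heC₂
  obtain ⟨C₄, hC₄U, hC₄, hfC₄, h', hh'C₄, hh'C₁, hh'C₂⟩ :=
    hC₂.exists_isCircuit_inter_sdiff_nonempty hC₁ hg₂ hg₁ hf hfC₁
  rw [union_comm] at hC₄U
  by_cases h₃₄ : (C₃ ∩ C₄).Nonempty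
  · exact ih _ (ncard_lt_ncard_of_subset_sdiff_singleton (union_subset hC₃U hC₄U)
      (mem_union_left _ hg₁) hfin) hC₃ hC₄ h₃₄ heC₃ hfC₄ rfl
  have hh'C₃ : h' ∉ C₃ := fun hh' ↦ h₃₄ ⟨h', hh', hh'C₄⟩
  have hsub : C₃ ∪ C₂ ⊆ (C₁ ∪ C₂) \ {h'} := by
    rintro y (hy | hy)
    · exact ⟨(hC₃U hy).1, by rintro rfl; exact hh'C₃ hy⟩
    · exact ⟨mem_union_right _ hy, by rintro rfl; exact hh'C₂ hy⟩
  exact ih _ (ncard_lt_ncard_of_subset_sdiff_singleton hsub (mem_union_left _ hh'C₁) hfin)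
    hC₃ hC₂ ⟨h, hhC₃, hhC₂⟩ heC₃ hf rfl

def circuitComponent (M : Matroid α) (a : α) : Set α :=
  insert a {e | ∃ C, M.IsCircuit C ∧ a ∈ C ∧ e ∈ C}

lemma circuitComponent_subset_ground (ha : a ∈ M.E) : M.circuitComponent a ⊆ M.E :=
  insert_subset ha fun _ ⟨_, hC, _, heC⟩ ↦ hC.subset_ground heC

lemma IsCircuit.subset_circuitComponent_or_disjoint [M.Finitary] (hC : M.IsCircuit C) (a : α) :
    C ⊆ M.circuitComponent a ∨ Disjoint C (M.circuitComponent a) := by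
  rw [or_iff_not_imp_right, not_disjoint_iff]
  rintro ⟨p, hpC, rfl | ⟨D, hD, haD, hpD⟩⟩ e heC
  · exact Or.inr ⟨C, hC, hpC, heC⟩
  · exact Or.inr (hD.exists_isCircuit_mem_mem hC ⟨p, hpD, hpC⟩ haD heC)

lemma Indep.union_indep_of_forall_isCircuit (hI : M.Indep I) (hJ : M.Indep J) (hIS : I ⊆ S)
    (hJT : J ⊆ T) (hST : Disjoint S T) (hsep : ∀ C, M.IsCircuit C → C ⊆ S ∨ C ⊆ T) :
    M.Indep (I ∪ J) := by
  rw [indep_iff_forall_subset_not_isCircuit (union_subset hI.subset_ground hJ.subset_ground)]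
  intro C hCIJ hC
  rcases hsep C hC with hCS | hCT
  · exact hC.not_indep (hI.subset fun y hy ↦ (hCIJ hy).resolve_right
      fun hyJ ↦ hST.notMem_of_mem_left (hCS hy) (hJT hyJ))
  · exact hC.not_indep (hJ.subset fun y hy ↦ (hCIJ hy).resolve_left
      fun hyI ↦ hST.notMem_of_mem_left (hIS hyI) (hCT hy))

lemma eRk_insert_add_eRk_insert_le (hx : M.IsNonloop x) (hSTE : S ∪ T = M.E \ {x})
    (hST : Disjoint S T) (hsep : ∀ C, (M ／ {x}).IsCircuit C → C ⊆ S ∨ C ⊆ T) :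
    M.eRk (insert x S) + M.eRk (insert x T) ≤ M.eRank + 1 := by
  obtain ⟨I, hI⟩ := (M ／ {x}).exists_isBasis S (subset_union_left.trans hSTE.subset)
  obtain ⟨J, hJ⟩ := (M ／ {x}).exists_isBasis T (subset_union_right.trans hSTE.subset)
  have hIJ : M.Indep (I ∪ J ∪ {x}) := (hx.indep.contract_indep_iff.1
    (hI.indep.union_indep_of_forall_isCircuit hJ.indep hI.subset hJ.subset hST hsep)).2
  calc M.eRk (insert x S) + M.eRk (insert x T) = (I ∪ {x}).encard + (J ∪ {x}).encard := by
        rw [← union_singleton, ← union_singleton,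
          (hx.indep.union_isBasis_union_of_contract_isBasis hI).eRk_eq_encard,
          (hx.indep.union_isBasis_union_of_contract_isBasis hJ).eRk_eq_encard]
    _ = (I ∪ J ∪ {x}).encard + 1 := by
        rw [← encard_union_add_encard_inter, ← union_union_distrib_right,
          ← inter_union_distrib_right, (hST.mono hI.subset hJ.subset).inter_eq, empty_union,
          encard_singleton]
    _ ≤ M.eRank + 1 := by gcongr; exact hIJ.encard_le_eRank

lemma eRk_insert_add_eRk_insert_eq (hx : M.IsNonloop x) (hSTE : S ∪ T = M.E \ {x})
    (hST : Disjoint S T) (hsep : ∀ C, (M ／ {x}).IsCircuit C → C ⊆ S ∨ C ⊆ T) :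
    M.eRk (insert x S) + M.eRk (insert x T) = M.eRank + 1 := by
  refine (eRk_insert_add_eRk_insert_le hx hSTE hST hsep).antisymm ?_
  have hsub := M.eRk_inter_add_eRk_union_le (insert x S) (insert x T)
  rwa [← insert_inter_distrib, hST.inter_eq, insert_empty_eq, hx.eRk_eq, ← insert_union_distrib,
    hSTE, insert_sdiff_singleton, insert_eq_of_mem hx.mem_ground, eRk_ground, add_comm] at hsub

lemma isFlat_insert_of_forall_isCircuit (hx : x ∈ M.E) (hSTE : S ∪ T = M.E \ {x})
    (hST : Disjoint S T) (hsep : ∀ C, (M ／ {x}).IsCircuit C → C ⊆ S ∨ C ⊆ T)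
    (hT : ∀ e ∈ T, (M ／ {x}).IsNonloop e) : M.IsFlat (insert x S) := by
  have hSE : S ⊆ M.E \ {x} := subset_union_left.trans hSTE.subset
  refine isFlat_iff_closure_eq.2 (subset_antisymm (fun e he ↦ by_contra fun heA ↦ ?_)
    (M.subset_closure _ (insert_subset hx (hSE.trans sdiff_subset))))
  rw [mem_insert_iff, not_or] at heA
  have heT : e ∈ T :=
    (hSTE.symm.subset ⟨M.closure_subset_ground _ he, heA.1⟩ : e ∈ S ∪ T).resolve_left heA.2
  have hecl : e ∈ (M ／ {x}).closure S := by
    rw [contract_closure_eq, union_singleton]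
    exact ⟨he, heA.1⟩
  -- a circuit of `M ／ {x}` through `e` inside `S ∪ {e}` must lie in `T`, so it is `{e}`
  obtain ⟨C, hCS, hC, heC⟩ := (mem_closure_iff_exists_isCircuit heA.2).1 hecl
  have hCe : C ⊆ {e} := by
    rcases hsep C hC with h | h
    · exact absurd (h heC) (hST.notMem_of_mem_right heT)
    · exact fun y hy ↦ (hCS hy).resolve_right (hST.notMem_of_mem_right (h hy))
  rw [subset_antisymm hCe (singleton_subset_iff.2 heC), singleton_isCircuit] at hC
  exact (hT e heT).not_isLoop hC

lemma IsCircuit.subset_insert_of_forall_isCircuit (hC : M.IsCircuit C) (hxC : x ∈ C)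
    (he : e ∈ C) (heS : e ∈ S) (hex : e ≠ x) (hST : Disjoint S T)
    (hsep : ∀ C, (M ／ {x}).IsCircuit C → C ⊆ S ∨ C ⊆ T) : C ⊆ insert x S := by
  rcases hsep _ (hC.contractElem_isCircuit ⟨x, hxC, e, he, hex.symm⟩ hxC) with h | h
  · exact sdiff_singleton_subset_iff.1 h
  · exact absurd (h ⟨he, hex⟩) (hST.notMem_of_mem_left heS)

lemma IsNonloop.contractElem_isNonloop (he : M.IsNonloop e) (hx : M.IsNonloop x) (hex : e ≠ x)
    (hpar : ¬ M.IsCircuit {x, e}) : (M ／ {x}).IsNonloop e := by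
  refine contract_isNonloop_iff.2 ⟨he.mem_ground, fun hecl ↦ hpar ?_⟩
  rw [pair_comm]
  refine hx.indep.insert_isCircuit_of_forall hex hecl ?_
  simpa [closure_empty, IsLoop] using he.not_isLoop

end Matroid

namespace LPM

open Matroid

variable {α : Type*} {M : Matroid α} {C S T : Set α} {e x : α}

lemma contract_eq (M : Matroid α) (C : Set α) : contract M C = M ／ C := rfl

lemma circuit_iff_isCircuit : Circuit M C ↔ M.IsCircuit C := by
  rw [isCircuit_iff_forall_ssubset, Matroid.Dep, Circuit]
  tauto

lemma connected_iff : Connected M ↔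
    ∀ e ∈ M.E, ∀ f ∈ M.E, e ≠ f → ∃ C, M.IsCircuit C ∧ e ∈ C ∧ f ∈ C := by
  simp only [Connected, circuit_iff_isCircuit]

lemma connected_of_forall_exists_isCircuit [M.Finitary] (hx : x ∈ M.E)
    (h : ∀ y ∈ M.E, y ≠ x → ∃ C, M.IsCircuit C ∧ x ∈ C ∧ y ∈ C) : Connected M := by
  refine connected_iff.2 fun u hu v hv huv ↦ ?_
  obtain rfl | hux := eq_or_ne u x
  · exact h v hv huv.symm
  obtain ⟨C₁, hC₁, hxC₁, huC₁⟩ := h u hu hux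
  obtain rfl | hvx := eq_or_ne v x
  · exact ⟨C₁, hC₁, huC₁, hxC₁⟩
  obtain ⟨C₂, hC₂, hxC₂, hvC₂⟩ := h v hv hvx
  exact hC₁.exists_isCircuit_mem_mem hC₂ ⟨x, hxC₁, hxC₂⟩ huC₁ hvC₂

lemma Connected.isNonloop (hM : Connected M) (hE : 1 < M.E.ncard) (he : e ∈ M.E) :
    M.IsNonloop e := by
  obtain ⟨f, hf, hfe⟩ := exists_ne_of_one_lt_ncard hE e
  obtain ⟨C, hC, heC, hfC⟩ := connected_iff.1 hM e he f hf hfe.symm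
  refine (not_isLoop_iff he).1 fun hloop ↦ hfe ?_
  rw [← singleton_isCircuit] at hloop
  exact (hloop.eq_of_subset_isCircuit hC (singleton_subset_iff.2 heC)).symm.subset hfC

lemma rk_eq_eRk [M.RankFinite] (X : Set α) : (rk M X : ℕ∞) = M.eRk X := by
  obtain ⟨I, hI⟩ := M.exists_isBasis' X
  have hcard : ∀ J, M.Indep J → (J.ncard : ℕ∞) = J.encard := fun J hJ ↦ hJ.finite.cast_ncard_eq
  suffices h : IsGreatest {n | ∃ J, J ⊆ X ∧ M.Indep J ∧ J.ncard = n} I.ncard by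
    rw [rk, h.csSup_eq, hcard I hI.indep, hI.encard_eq_eRk]
  refine ⟨⟨I, hI.subset, hI.indep, rfl⟩, ?_⟩
  rintro n ⟨J, hJX, hJ, rfl⟩
  have hle := hJ.encard_le_eRk_of_subset hJX
  rw [← hI.encard_eq_eRk, ← hcard J hJ, ← hcard I hI.indep] at hle
  exact_mod_cast hle

lemma exists_separation_of_not_connected [M.Finitary] (hM : ¬ Connected M) :
    ∃ S T, S ∪ T = M.E ∧ Disjoint S T ∧ (∀ C, M.IsCircuit C → C ⊆ S ∨ C ⊆ T) ∧
      S.Nonempty ∧ T.Nonempty := by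
  rw [connected_iff] at hM
  push Not at hM
  obtain ⟨a, ha, b, hb, hab, hnab⟩ := hM
  refine ⟨M.circuitComponent a, M.E \ M.circuitComponent a,
    union_sdiff_cancel (circuitComponent_subset_ground ha), disjoint_sdiff_right,
    fun C hC ↦ (hC.subset_circuitComponent_or_disjoint a).imp_right
      fun h ↦ subset_sdiff.2 ⟨hC.subset_ground, h⟩, ⟨a, mem_insert a _⟩, b, hb, ?_⟩
  rintro (rfl | ⟨C, hC, haC, hbC⟩)
  exacts [hab rfl, hnab C hC haC hbC]

lemma ntConnFlat_insert [M.Finitary] (hM : Connected M) (hx : x ∈ M.E)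
    (hSTE : S ∪ T = M.E \ {x}) (hST : Disjoint S T)
    (hsep : ∀ C, (M ／ {x}).IsCircuit C → C ⊆ S ∨ C ⊆ T)
    (hT : ∀ e ∈ T, (M ／ {x}).IsNonloop e) (hS : S.Nonempty) : NTConnFlat M (insert x S) := by
  have hSE : S ⊆ M.E \ {x} := subset_union_left.trans hSTE.subset
  have hA : insert x S ⊆ M.E := insert_subset hx (hSE.trans sdiff_subset)
  have hcirc : ∀ s ∈ S, ∃ C, M.IsCircuit C ∧ C ⊆ insert x S ∧ x ∈ C ∧ s ∈ C := by
    intro s hs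
    obtain ⟨C, hC, hxC, hsC⟩ := connected_iff.1 hM x hx s (hSE hs).1 (Ne.symm (hSE hs).2)
    exact ⟨C, hC, hC.subset_insert_of_forall_isCircuit hxC hsC hs (hSE hs).2 hST hsep, hxC, hsC⟩
  obtain ⟨s, hs⟩ := hS
  obtain ⟨C, hC, hCA, -, -⟩ := hcirc s hs
  refine ⟨isFlat_insert_of_forall_isCircuit hx hSTE hST hsep hT,
    fun hi ↦ hC.not_indep (hi.subset hCA),
    connected_of_forall_exists_isCircuit (mem_insert x S) fun y hy hyx ↦ ?_⟩
  obtain ⟨C, hC, hCA, hxC, hyC⟩ := hcirc y ((mem_insert_iff.1 hy).resolve_left hyx)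
  exact ⟨C, (restrict_isCircuit_iff hA).2 ⟨hC, hCA⟩, hxC, hyC⟩

end LPM

open LPM in
/-- If `M` is a connected finite matroid with at least two
elements, `x` is not parallel to any element, and `M/x` is disconnected, then
there are nontrivial incomparable connected flats `A`, `B` of `M` with
`r(A) + r(B) = r(M) + 1` and `A ∩ B = {x}`. -/
theorem stmt2 {α : Type*} (M : Matroid α) (hfin : M.E.Finite)
    (hconn : Connected M) (h2 : 2 ≤ M.E.ncard)
    (x : α) (hx : x ∈ M.E)
    (hpar : ¬ ∃ y : α, y ≠ x ∧ Circuit M {x, y})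
    (hdis : ¬ Connected (contract M {x})) :
    ∃ A B : Set α, NTConnFlat M A ∧ NTConnFlat M B ∧
      ¬ A ⊆ B ∧ ¬ B ⊆ A ∧
      rk M A + rk M B = rk M M.E + 1 ∧ A ∩ B = {x} := by
  have : M.Finite := ⟨hfin⟩
  have hnonloop : ∀ e ∈ M.E, M.IsNonloop e := fun e he ↦ hconn.isNonloop (by omega) he
  have hN : ∀ e ∈ M.E \ {x}, (M ／ {x}).IsNonloop e := fun e he ↦
    (hnonloop e he.1).contractElem_isNonloop (hnonloop x hx) he.2
      fun h ↦ hpar ⟨e, he.2, circuit_iff_isCircuit.2 h⟩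
  rw [contract_eq] at hdis
  obtain ⟨S, T, hSTE, hST, hsep, ⟨a, haS⟩, ⟨b, hbT⟩⟩ := exists_separation_of_not_connected hdis
  have hSE : S ∪ T ⊆ M.E \ {x} := hSTE.subset
  refine ⟨insert x S, insert x T,
    ntConnFlat_insert hconn hx hSTE hST hsep (fun e he ↦ hN e (hSE (.inr he))) ⟨a, haS⟩,
    ntConnFlat_insert hconn hx (union_comm S T ▸ hSTE) hST.symm (fun C hC ↦ (hsep C hC).symm)
      (fun e he ↦ hN e (hSE (.inl he))) ⟨b, hbT⟩,
    fun h ↦ (h (.inr haS)).elim (hSE (.inl haS)).2 (hST.notMem_of_mem_left haS),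
    fun h ↦ (h (.inr hbT)).elim (hSE (.inr hbT)).2 (hST.notMem_of_mem_right hbT), ?_, ?_⟩
  · have h := Matroid.eRk_insert_add_eRk_insert_eq (hnonloop x hx) hSTE hST hsep
    rw [← rk_eq_eRk, ← rk_eq_eRk, ← Matroid.eRk_ground, ← rk_eq_eRk] at h
    exact_mod_cast h
  · rw [← insert_inter_distrib, hST.inter_eq, insert_empty_eq]
end

section
/- Let m ≥ 1 and r ≥ 1 and let (N_1,…,N_r), N_i = [l_i, g_i] ⊆ {1,…,m+r}, be a lattice path presentation. Then there exists a lattice path presentation (N′_1,…,N′_m) of m intervals in {1,…,m+r} such that the dual matroid M[N]* equals M[N′]; equivalently, the complements {1,…,m+r} ∖ B of the bases B of M[N] are exactly the m-element sets {c_1 < c_2 < ⋯ < c_m} with c_j ∈ N′_j for all j. -/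
open Set
open scoped Matroid

/-!
A set `B ⊆ {1, …, n}`, `n = m + r`, is a transversal of `(N_1, …, N_r)` iff its counting
function `k ↦ #(B ∩ [1, k])` lies between `k ↦ #{i | g_i ≤ k}` and `k ↦ #{i | l_i ≤ k}`
(sort `B` and compare). The counting function of `{1, …, n} \ B` is `k` minus that of `B`, so the
complements of the transversals are exactly the transversals of the presentation whose left
endpoints enumerate `{1, …, n} \ {g_i}` and whose right endpoints enumerate `{1, …, n} \ {l_i}`.
As the bases of `M[N]` are its transversals, it remains to extend every partial transversal `I`
of a presentation to a full one. Take the least lattice path that stays above the lower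
boundary and rises at every element of `I`: it stays below the upper boundary, since a window
`(j, k]` contains at most as many elements of `I` as there are intervals meeting it.
-/

namespace LPM

noncomputable def count (X : Set ℕ) (k : ℕ) : ℕ := (X ∩ Icc 1 k).ncard

lemma count_zero (X : Set ℕ) : count X 0 = 0 := by simp [count]

lemma count_add_ncard_inter_Ioc (X : Set ℕ) {j k : ℕ} (hjk : j ≤ k) :
    count X j + (X ∩ Ioc j k).ncard = count X k := by
  have hIcc (k : ℕ) : Icc 1 k = Ioc 0 k := Icc_add_one_left_eq_Ioc 0 k
  rw [count, count, hIcc, hIcc, ← ncard_union_eq, ← inter_union_distrib_left,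
    Ioc_union_Ioc_eq_Ioc (Nat.zero_le j) hjk]
  exact (Ioc_disjoint_Ioc_of_le le_rfl).mono inter_subset_right inter_subset_right

open Classical in
lemma count_succ (X : Set ℕ) (k : ℕ) :
    count X (k + 1) = count X k + if k + 1 ∈ X then 1 else 0 := by
  have hIoc : Ioc k (k + 1) = {k + 1} := by ext; simp; omega
  rw [← count_add_ncard_inter_Ioc X k.le_succ, hIoc]
  split_ifs with h <;> simp [h]

lemma count_mono (X : Set ℕ) : Monotone (count X) :=
  monotone_nat_of_le_succ fun k => by rw [count_succ]; omega

lemma count_succ_le (X : Set ℕ) (k : ℕ) : count X (k + 1) ≤ count X k + 1 := by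
  rw [count_succ]; split_ifs <;> omega

lemma count_succ_of_mem {X : Set ℕ} {k : ℕ} (hk : k + 1 ∈ X) :
    count X (k + 1) = count X k + 1 := by
  rw [count_succ, if_pos hk]

lemma count_eq_ncard {X : Set ℕ} {n k : ℕ} (hX : X ⊆ Icc 1 n) (hk : n ≤ k) :
    count X k = X.ncard := by
  rw [count, inter_eq_left.2 (hX.trans (Icc_subset_Icc_right hk))]

lemma count_Icc_diff_add_count (X : Set ℕ) {n k : ℕ} (hk : k ≤ n) :
    count (Icc 1 n \ X) k + count X k = k := by
  induction k with
  | zero => rw [count_zero, count_zero]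
  | succ k ih =>
    classical
    have hmem : k + 1 ∈ Icc 1 n \ X ↔ k + 1 ∉ X := by simp; omega
    have := ih (by omega)
    simp only [count_succ, hmem]
    split_ifs <;> omega

lemma count_range {ρ : ℕ} {a : Fin ρ → ℕ} (ha : Function.Injective a) (ha1 : ∀ i, 1 ≤ a i)
    (k : ℕ) : count (range a) k = {i | a i ≤ k}.ncard := by
  have himage : range a ∩ Icc 1 k = a '' {i | a i ≤ k} := by
    ext x; constructor
    · rintro ⟨⟨i, rfl⟩, -, hi⟩; exact ⟨i, hi, rfl⟩
    · rintro ⟨i, hi, rfl⟩; exact ⟨⟨i, rfl⟩, ha1 i, hi⟩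
  rw [count, himage, ncard_image_of_injective _ ha]

lemma count_image_succ_setOf_lt {f : ℕ → ℕ} (hf0 : f 0 = 0) (hmono : Monotone f)
    (hstep : ∀ k, f (k + 1) ≤ f k + 1) (k : ℕ) :
    count ((· + 1) '' {j | f j < f (j + 1)}) k = f k := by
  induction k with
  | zero => rw [count_zero, hf0]
  | succ k ih =>
    classical
    have hmem : k + 1 ∈ (· + 1) '' {j | f j < f (j + 1)} ↔ f k < f (k + 1) := by simp
    have : f k ≤ f (k + 1) := hmono k.le_succ
    have := hstep k
    simp only [count_succ, ih, hmem]
    split_ifs <;> omega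

section StrictMonoFin

variable {ρ : ℕ} {a b : Fin ρ → ℕ}

lemma _root_.StrictMono.le_iff_lt_ncard (ha : StrictMono a) (j : Fin ρ) (k : ℕ) :
    a j ≤ k ↔ (j : ℕ) < {i | a i ≤ k}.ncard := by
  constructor
  · intro hj
    calc (j : ℕ) < (Iic j).ncard := by simp [ncard_eq_toFinset_card']
      _ ≤ {i | a i ≤ k}.ncard :=
        ncard_le_ncard fun i (hi : i ≤ j) => (ha.monotone hi).trans hj
  · intro hj
    by_contra! hk
    have hsub : {i | a i ≤ k} ⊆ Iio j := fun i (hi : a i ≤ k) =>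
      ha.lt_iff_lt.1 (hi.trans_lt hk)
    have hIio : (Iio j).ncard = j := by simp [ncard_eq_toFinset_card']
    exact hj.not_ge (hIio ▸ ncard_le_ncard hsub)

lemma _root_.StrictMono.le_of_ncard_le (ha : StrictMono a) (hb : StrictMono b) {N : ℕ}
    (hbN : ∀ i, b i ≤ N) (h : ∀ k ≤ N, {i | b i ≤ k}.ncard ≤ {i | a i ≤ k}.ncard) (i : Fin ρ) :
    a i ≤ b i :=
  (ha.le_iff_lt_ncard i _).2 <| ((hb.le_iff_lt_ncard i _).1 le_rfl).trans_le (h _ (hbN i))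

end StrictMonoFin

lemma exists_strictMono_range_eq {X : Set ℕ} {ρ : ℕ} (hX : X.Finite) (hρ : X.ncard = ρ) :
    ∃ s : Fin ρ → ℕ, StrictMono s ∧ range s = X := by
  refine ⟨hX.toFinset.orderEmbOfFin (by rw [← hρ, ncard_eq_toFinset_card X hX]),
    OrderEmbedding.strictMono _, ?_⟩
  rw [Finset.range_orderEmbOfFin, hX.coe_toFinset]

section Transversal

variable {α ι : Type*} {N : ι → Set α} {X Y : Set α}

lemma isT_iff_exists_injective :
    IsT N X ↔ ∃ s : ι → α, Function.Injective s ∧ range s = X ∧ ∀ i, s i ∈ N i := by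
  constructor
  · rintro ⟨f, hf, hN⟩
    obtain ⟨e, rfl⟩ : ∃ e : X ≃ ι, ⇑e = f := ⟨Equiv.ofBijective f hf, rfl⟩
    refine ⟨Subtype.val ∘ e.symm, Subtype.val_injective.comp e.symm.injective, ?_, fun i => ?_⟩
    · rw [e.symm.surjective.range_comp, Subtype.range_coe]
    · simpa only [Function.comp_apply, e.apply_symm_apply] using hN (e.symm i)
  · rintro ⟨s, hs, rfl, hN⟩
    refine ⟨(Equiv.ofInjective s hs).symm, Equiv.bijective _, fun x => ?_⟩
    simpa only [Equiv.apply_ofInjective_symm] using hN ((Equiv.ofInjective s hs).symm x)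

lemma IsT.isPT (h : IsT N X) : IsPT N X :=
  let ⟨f, hf, hN⟩ := h; ⟨f, hf.1, hN⟩

lemma IsPT.mono (h : IsPT N X) (hYX : Y ⊆ X) : IsPT N Y :=
  let ⟨f, hf, hN⟩ := h
  ⟨f ∘ inclusion hYX, hf.comp (inclusion_injective hYX), fun y => hN (inclusion hYX y)⟩

variable {ρ : ℕ} {N : Fin ρ → Set α}

lemma IsPT.finite_s6 (h : IsPT N X) : X.Finite :=
  let ⟨_, hf, _⟩ := h; finite_coe_iff.1 (Finite.of_injective _ hf)

lemma IsPT.ncard_le_s6 (h : IsPT N X) : X.ncard ≤ ρ := by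
  obtain ⟨f, hf, -⟩ := h
  simpa [Nat.card_coe_set_eq] using Nat.card_le_card_of_injective f hf

lemma IsT.ncard_eq (h : IsT N X) : X.ncard = ρ := by
  obtain ⟨f, hf, -⟩ := h
  simpa [Nat.card_coe_set_eq] using Nat.card_eq_of_bijective f hf

lemma IsPT.isT_of_ncard_eq (h : IsPT N X) (hX : X.ncard = ρ) : IsT N X := by
  obtain ⟨f, hf, hN⟩ := h
  exact ⟨f, hf.bijective_of_nat_card_le (by simp [Nat.card_coe_set_eq, hX]), hN⟩

end Transversal

namespace LPP

variable {μ ρ : ℕ} (Q : LPP μ ρ)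

lemma ncard_setOf_g_le_eq_card {k : ℕ} (hk : μ + ρ ≤ k) : {i | Q.g i ≤ k}.ncard = ρ := by
  simp [fun i => (Q.g_le i).trans hk]

lemma isT_iff_count {X : Set ℕ} (hX : X ⊆ Icc 1 (μ + ρ)) :
    IsT Q.N X ↔ ∀ k ≤ μ + ρ,
      {i | Q.g i ≤ k}.ncard ≤ count X k ∧ count X k ≤ {i | Q.l i ≤ k}.ncard := by
  constructor
  · rw [isT_iff_exists_injective]
    rintro ⟨s, hs, rfl, hsN⟩ k -
    rw [count_range hs fun i => (Q.one_le_l i).trans (hsN i).1]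
    exact ⟨ncard_le_ncard fun i (hi : Q.g i ≤ k) => (hsN i).2.trans hi,
      ncard_le_ncard fun i (hi : s i ≤ k) => (hsN i).1.trans hi⟩
  · intro hcount
    have hXcard : X.ncard = ρ := by
      have := hcount _ le_rfl
      rw [count_eq_ncard hX le_rfl, Q.ncard_setOf_g_le_eq_card le_rfl] at this
      exact le_antisymm (this.2.trans ((ncard_le_card _).trans_eq (Nat.card_fin ρ))) this.1
    obtain ⟨s, hs, rfl⟩ := exists_strictMono_range_eq ((finite_Icc _ _).subset hX) hXcard
    have hsIcc (i : Fin ρ) : s i ∈ Icc 1 (μ + ρ) := hX (mem_range_self i)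
    have hcount_s (k : ℕ) : count (range s) k = {i | s i ≤ k}.ncard :=
      count_range hs.injective (fun i => (hsIcc i).1) k
    refine isT_iff_exists_injective.2 ⟨s, hs.injective, rfl, fun i => ⟨?_, ?_⟩⟩
    · exact Q.l_strictMono.le_of_ncard_le hs (fun i => (hsIcc i).2)
        (fun k hk => hcount_s k ▸ (hcount k hk).2) i
    · exact hs.le_of_ncard_le Q.g_strictMono Q.g_le
        (fun k hk => hcount_s k ▸ (hcount k hk).1) i

lemma l_mem_Icc (i : Fin ρ) : Q.l i ∈ Icc 1 (μ + ρ) :=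
  ⟨Q.one_le_l i, (Q.l_le_g i).trans (Q.g_le i)⟩

lemma g_mem_Icc (i : Fin ρ) : Q.g i ∈ Icc 1 (μ + ρ) :=
  ⟨(Q.one_le_l i).trans (Q.l_le_g i), Q.g_le i⟩

end LPP

section ComplEnum

variable {m r : ℕ} {e : Fin r → ℕ} (he : Function.Injective e) (hE : ∀ i, e i ∈ Icc 1 (m + r))

noncomputable def complEnum : Fin m ↪o ℕ :=
  (Finset.Icc 1 (m + r) \ Finset.univ.image e).orderEmbOfFin <| by
    rw [Finset.card_sdiff_of_subset (by simpa [Finset.image_subset_iff] using hE),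
      Finset.card_image_of_injective _ he, Nat.card_Icc, Finset.card_univ, Fintype.card_fin]
    omega

lemma range_complEnum : range (complEnum he hE) = Icc 1 (m + r) \ range e := by
  simp [complEnum, Finset.range_orderEmbOfFin]

lemma complEnum_mem (j : Fin m) : complEnum he hE j ∈ Icc 1 (m + r) \ range e :=
  range_complEnum he hE ▸ mem_range_self j

lemma ncard_setOf_complEnum_le_add_count {k : ℕ} (hk : k ≤ m + r) :
    {j | complEnum he hE j ≤ k}.ncard + count (range e) k = k := by
  rw [← count_range (complEnum he hE).injective (fun j => (complEnum_mem he hE j).1.1),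
    range_complEnum,
    count_Icc_diff_add_count _ hk]

lemma complEnum_le_complEnum {f : Fin r → ℕ} (hf : Function.Injective f)
    (hF : ∀ i, f i ∈ Icc 1 (m + r)) (hef : ∀ i, e i ≤ f i) (j : Fin m) :
    complEnum hf hF j ≤ complEnum he hE j := by
  refine (complEnum hf hF).strictMono.le_of_ncard_le (complEnum he hE).strictMono
    (N := m + r) (fun j => (complEnum_mem he hE j).1.2) (fun k hk => ?_) j
  have h1 := ncard_setOf_complEnum_le_add_count he hE hk
  have h2 := ncard_setOf_complEnum_le_add_count hf hF hk
  have h3 : count (range f) k ≤ count (range e) k := by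
    rw [count_range he (fun i => (hE i).1), count_range hf (fun i => (hF i).1)]
    exact ncard_le_ncard fun i (hi : f i ≤ k) => (hef i).trans hi
  omega

end ComplEnum

namespace LPP

variable {m r : ℕ} (P : LPP m r)

noncomputable def dual : LPP r m where
  l := complEnum P.g_strictMono.injective P.g_mem_Icc
  g := complEnum P.l_strictMono.injective P.l_mem_Icc
  l_strictMono := OrderEmbedding.strictMono _
  g_strictMono := OrderEmbedding.strictMono _
  one_le_l j := (complEnum_mem _ _ j).1.1
  l_le_g := complEnum_le_complEnum _ _ _ _ P.l_le_g
  g_le j := add_comm m r ▸ (complEnum_mem _ _ j).1.2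

lemma isT_iff_isT_dual_compl {B : Set ℕ} (hB : B ⊆ Icc 1 (m + r)) :
    IsT P.N B ↔ IsT P.dual.N (Icc 1 (m + r) \ B) := by
  rw [P.isT_iff_count hB, P.dual.isT_iff_count (add_comm m r ▸ sdiff_subset), add_comm r m]
  refine forall₂_congr fun k hk => ?_
  have hl := ncard_setOf_complEnum_le_add_count P.g_strictMono.injective P.g_mem_Icc hk
  have hg := ncard_setOf_complEnum_le_add_count P.l_strictMono.injective P.l_mem_Icc hk
  have hB := count_Icc_diff_add_count B hk
  rw [count_range P.g_strictMono.injective fun i => (P.g_mem_Icc i).1] at hl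
  rw [count_range P.l_strictMono.injective P.one_le_l] at hg
  change {j | P.dual.l j ≤ k}.ncard + _ = k at hl
  change {j | P.dual.g j ≤ k}.ncard + _ = k at hg
  omega

end LPP

namespace LPP

variable {μ ρ : ℕ} (Q : LPP μ ρ) {I : Set ℕ}

lemma count_add_ncard_setOf_g_le_le (hI : IsPT Q.N I) {j k : ℕ} (hjk : j ≤ k) :
    count I k + {i | Q.g i ≤ j}.ncard ≤ count I j + {i | Q.l i ≤ k}.ncard := by
  obtain ⟨f, hf, hN⟩ := hI
  have hsub : {i | Q.g i ≤ j} ⊆ {i | Q.l i ≤ k} := fun i (hi : Q.g i ≤ j) =>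
    (Q.l_le_g i).trans (hi.trans hjk)
  have hwindow : (I ∩ Ioc j k).ncard ≤ ({i | Q.l i ≤ k} \ {i | Q.g i ≤ j}).ncard := by
    rw [← Nat.card_coe_set_eq, ← Nat.card_coe_set_eq]
    refine Nat.card_le_card_of_injective
      (fun x => ⟨f (inclusion inter_subset_left x), ?_⟩) fun x y hxy => ?_
    · obtain ⟨hl, hg⟩ := hN (inclusion inter_subset_left x)
      exact ⟨hl.trans x.2.2.2, fun h => (h.trans_lt x.2.2.1).not_ge hg⟩
    · exact inclusion_injective _ (hf (congrArg Subtype.val hxy))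
  have := count_add_ncard_inter_Ioc I hjk
  have := ncard_sdiff hsub
  have := ncard_le_ncard hsub
  omega

/-- The pointwise least lattice path above the lower boundary `k ↦ #{i | g i ≤ k}` that takes
a north step at every element of `I`. -/
noncomputable def lowPath (I : Set ℕ) : ℕ → ℕ
  | 0 => 0
  | k + 1 => max (lowPath I k + (count I (k + 1) - count I k)) {i | Q.g i ≤ k + 1}.ncard

lemma lowPath_succ (k : ℕ) : Q.lowPath I (k + 1) =
    max (Q.lowPath I k + (count I (k + 1) - count I k)) {i | Q.g i ≤ k + 1}.ncard := rfl

lemma ncard_setOf_g_le_eq_count (k : ℕ) : {i | Q.g i ≤ k}.ncard = count (range Q.g) k :=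
  (count_range Q.g_strictMono.injective (fun i => (Q.g_mem_Icc i).1) k).symm

lemma lowPath_mono : Monotone (Q.lowPath I) :=
  monotone_nat_of_le_succ fun k =>
    (Nat.le_add_right _ _).trans (Q.lowPath_succ k ▸ le_max_left _ _)

lemma ncard_setOf_g_le_le_lowPath (k : ℕ) : {i | Q.g i ≤ k}.ncard ≤ Q.lowPath I k := by
  cases k with
  | zero => rw [ncard_setOf_g_le_eq_count, count_zero]; exact Nat.zero_le _
  | succ k => exact Q.lowPath_succ k ▸ le_max_right _ _

lemma lowPath_succ_le (k : ℕ) : Q.lowPath I (k + 1) ≤ Q.lowPath I k + 1 := by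
  have := count_succ_le I k
  have hg := count_succ_le (range Q.g) k
  rw [← ncard_setOf_g_le_eq_count, ← ncard_setOf_g_le_eq_count] at hg
  have := Q.ncard_setOf_g_le_le_lowPath (I := I) k
  rw [lowPath_succ]
  omega

lemma lowPath_lt_of_mem {k : ℕ} (hk : k + 1 ∈ I) : Q.lowPath I k < Q.lowPath I (k + 1) := by
  have := count_succ_of_mem hk
  rw [lowPath_succ]
  exact (by omega : Q.lowPath I k < Q.lowPath I k + (count I (k + 1) - count I k)).trans_le
    (le_max_left _ _)

/-- The lower boundary was last touched at some `j ≤ k`, and the path has risen only at the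
elements of `I` since then. -/
lemma exists_lowPath_add_count (k : ℕ) :
    ∃ j ≤ k, Q.lowPath I k + count I j = {i | Q.g i ≤ j}.ncard + count I k := by
  induction k with
  | zero => exact ⟨0, le_rfl, by simp only [ncard_setOf_g_le_eq_count, count_zero]; rfl⟩
  | succ k ih =>
    obtain ⟨j, hjk, hj⟩ := ih
    have : count I k ≤ count I (k + 1) := count_mono I k.le_succ
    rcases le_total (Q.lowPath I k + (count I (k + 1) - count I k))
      {i | Q.g i ≤ k + 1}.ncard with h | h
    · exact ⟨k + 1, le_rfl, by rw [lowPath_succ, max_eq_right h]⟩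
    · exact ⟨j, hjk.trans k.le_succ, by rw [lowPath_succ, max_eq_left h]; omega⟩

lemma lowPath_le (hI : IsPT Q.N I) (k : ℕ) : Q.lowPath I k ≤ {i | Q.l i ≤ k}.ncard := by
  obtain ⟨j, hjk, hj⟩ := Q.exists_lowPath_add_count (I := I) k
  have := Q.count_add_ncard_setOf_g_le_le hI hjk
  omega

lemma exists_isT_superset (hI : I ⊆ Icc 1 (μ + ρ)) (hpt : IsPT Q.N I) :
    ∃ C, I ⊆ C ∧ C ⊆ Icc 1 (μ + ρ) ∧ IsT Q.N C := by
  set f := Q.lowPath I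
  set C := (· + 1) '' {j | f j < f (j + 1)}
  have hcount : ∀ k, count C k = f k :=
    count_image_succ_setOf_lt rfl Q.lowPath_mono Q.lowPath_succ_le
  have hIC : I ⊆ C := fun x hx => by
    obtain ⟨j, rfl⟩ := Nat.exists_eq_add_one.2 (hI hx).1
    exact ⟨j, Q.lowPath_lt_of_mem hx, rfl⟩
  have hCE : C ⊆ Icc 1 (μ + ρ) := by
    rintro _ ⟨j, hj, rfl⟩
    have hj' : f j < f (j + 1) := hj
    refine ⟨Nat.le_add_left 1 j, not_lt.1 fun hlt => hj'.not_ge ?_⟩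
    replace hlt : μ + ρ ≤ j := by simp only at hlt; omega
    calc f (j + 1) ≤ {i | Q.l i ≤ j + 1}.ncard := Q.lowPath_le hpt _
      _ ≤ ρ := (ncard_le_card _).trans_eq (Nat.card_fin ρ)
      _ = {i | Q.g i ≤ j}.ncard := (Q.ncard_setOf_g_le_eq_card hlt).symm
      _ ≤ f j := Q.ncard_setOf_g_le_le_lowPath j
  exact ⟨C, hIC, hCE, (Q.isT_iff_count hCE).2 fun k _ =>
    hcount k ▸ ⟨Q.ncard_setOf_g_le_le_lowPath k, Q.lowPath_le hpt k⟩⟩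

end LPP

namespace IsLPMOf

variable {m r : ℕ} {P : LPP m r} {M : Matroid ℕ} {B : Set ℕ}

lemma isBase_of_isT (hM : IsLPMOf P M) (hBE : B ⊆ Icc 1 (m + r)) (hB : IsT P.N B) :
    M.IsBase B :=
  ((hM.2 B).2 ⟨hBE, hB.isPT⟩).isBase_of_maximal fun J hJ hBJ =>
    let hJpt := ((hM.2 J).1 hJ).2
    eq_of_subset_of_ncard_le hBJ (hB.ncard_eq ▸ hJpt.ncard_le_s6) hJpt.finite_s6

lemma isBase_iff (hM : IsLPMOf P M) : M.IsBase B ↔ B ⊆ Icc 1 (m + r) ∧ IsT P.N B := by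
  refine ⟨fun hB => ?_, fun h => hM.isBase_of_isT h.1 h.2⟩
  obtain ⟨hBE, hBpt⟩ := (hM.2 B).1 hB.indep
  have hl : IsT P.N (range P.l) :=
    isT_iff_exists_injective.2
      ⟨P.l, P.l_strictMono.injective, rfl, fun i => ⟨le_rfl, P.l_le_g i⟩⟩
  have hlE : range P.l ⊆ Icc 1 (m + r) := range_subset_iff.2 P.l_mem_Icc
  refine ⟨hBE, hBpt.isT_of_ncard_eq ?_⟩
  rw [hB.ncard_eq_ncard_of_isBase (hM.isBase_of_isT hlE hl), hl.ncard_eq]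

end IsLPMOf

end LPM

open LPM in
theorem stmt6_general {m r : ℕ} (P : LPP m r)
    (M : Matroid ℕ) (hM : IsLPMOf P M) :
    ∃ P' : LPP r m, IsLPMOf P' M✶ := by
  refine ⟨P.dual, by rw [Matroid.dual_ground, hM.1, add_comm], fun I => ?_⟩
  rw [Matroid.dual_indep_iff_exists', hM.1, add_comm r m]
  constructor
  · rintro ⟨hIE, B, hB, hIB⟩
    obtain ⟨hBE, hBT⟩ := hM.isBase_iff.1 hB
    exact ⟨hIE, ((P.isT_iff_isT_dual_compl hBE).1 hBT).isPT.mono (subset_sdiff.2 ⟨hIE, hIB⟩)⟩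
  · rintro ⟨hIE, hIpt⟩
    obtain ⟨C, hIC, hCE, hCT⟩ := P.dual.exists_isT_superset (add_comm m r ▸ hIE) hIpt
    rw [add_comm r m] at hCE
    refine ⟨hIE, Icc 1 (m + r) \ C, hM.isBase_iff.2 ⟨sdiff_subset, ?_⟩, ?_⟩
    · rwa [P.isT_iff_isT_dual_compl sdiff_subset, sdiff_sdiff_cancel_left hCE]
    · exact disjoint_sdiff_right.mono_left hIC

open LPM in
/-- The dual of the lattice path matroid of a presentation with
parameters `(m, r)` (with `m, r ≥ 1`) is the lattice path matroid of a
presentation with parameters `(r, m)`. -/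
theorem stmt6 {m r : ℕ} (hm : 1 ≤ m) (hr : 1 ≤ r) (P : LPP m r)
    (M : Matroid ℕ) (hM : IsLPMOf P M) :
    ∃ P' : LPP r m, IsLPMOf P' M✶ :=
  stmt6_general P M hM
end

section
/- Let m ≥ 1 and r ≥ 1 and let (N_1,…,N_r), N_i = [l_i, g_i] ⊆ {1,…,m+r}, be a lattice path presentation. The lattice path matroid M[N] is connected if and only if l_1 = 1, g_r = m + r, and l_{i+1} ≤ g_i for every i with 1 ≤ i < r. (These conditions say exactly that the two bounding lattice paths P and Q intersect only at (0,0) and (m,r).) -/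
open Set
open scoped Matroid

/-!
If one of the conditions fails, there is a cut: an element `p` with `1 ≤ p < m + r` and an index
`q` such that the elements `≤ p` lie only in `N_1, …, N_q` and the others only in
`N_{q+1}, …, N_r` (take `p = l_1 - 1`, `p = g_r` or `p = g_i` with `g_i < l_{i+1}`). Matching the
two sides of a set separately matches the whole set, so no circuit crosses the cut.

Conversely, for `x < y` we build a chain `c_0 < c_1 < ⋯ < c_k` containing both, with
`c_t, c_{t+1} ∈ N_{a+t}` for `t < k`, `c_0 > g_{a-1}` and `c_k < l_{a+k}`. It has one element
more than the window `N_a, …, N_{a+k-1}` to which its elements are confined, while dropping any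
element leaves a set matched into the window: it is a circuit. The chain consists of `x`, `y` and
the right ends strictly between them, preceded by `l_1, …, l_s` if `x = g_s`, and followed by
`g_{v+1}, …, g_r` if `y ≥ l_{v+1}`, where `N_v` is the first interval containing `y`.
-/

namespace LPM

section Matching

variable {α ι : Type*} {N : ι → Set α} {I : Set α} {f : α → ι}

def IsMatching (N : ι → Set α) (I : Set α) (f : α → ι) : Prop :=
  InjOn f I ∧ ∀ x ∈ I, x ∈ N (f x)

theorem IsMatching.mono (hf : IsMatching N I f) {J : Set α} (hJI : J ⊆ I) : IsMatching N J f :=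
  ⟨hf.1.mono hJI, fun x hx => hf.2 x (hJI hx)⟩

theorem IsMatching.insert [DecidableEq α] {S : Set ι} {x : α} {i : ι} (hf : IsMatching N I f)
    (hfS : MapsTo f I S) (hx : x ∉ I) (hi : i ∉ S) (hxi : x ∈ N i) :
    IsMatching N (insert x I) (Function.update f x i) ∧
      MapsTo (Function.update f x i) (insert x I) (insert i S) := by
  have heq : EqOn (Function.update f x i) f I := fun z hz =>
    Function.update_of_ne (ne_of_mem_of_not_mem hz hx) _ _
  refine ⟨⟨(injOn_insert hx).2 ⟨hf.1.congr heq.symm, ?_⟩, ?_⟩, ?_⟩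
  · rw [heq.image_eq, Function.update_self]
    rintro ⟨z, hz, hfz⟩
    exact hi (hfz ▸ hfS hz)
  · rintro z (rfl | hz)
    · rwa [Function.update_self]
    · rw [heq hz]; exact hf.2 z hz
  · rintro z (rfl | hz)
    · rw [Function.update_self]; exact mem_insert _ _
    · rw [heq hz]; exact mem_insert_of_mem _ (hfS hz)

theorem IsMatching.piecewise {s : Set α} [∀ x, Decidable (x ∈ s)] {g : α → ι}
    (hf : IsMatching N (I ∩ s) f) (hg : IsMatching N (I \ s) g)
    (hfg : ∀ x ∈ I ∩ s, ∀ y ∈ I \ s, f x ≠ g y) : IsMatching N I (s.piecewise f g) := by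
  have hf' : EqOn (s.piecewise f g) f (I ∩ s) := fun x hx => piecewise_eq_of_mem _ _ _ hx.2
  have hg' : EqOn (s.piecewise f g) g (I \ s) := fun x hx => piecewise_eq_of_notMem _ _ _ hx.2
  rw [← inter_union_sdiff I s]
  refine ⟨(injOn_union disjoint_sdiff_inter.symm).2 ⟨hf.1.congr hf'.symm, hg.1.congr hg'.symm,
    fun x hx y hy => by rw [hf' hx, hg' hy]; exact hfg x hx y hy⟩, ?_⟩
  rintro x (hx | hx)
  · rw [hf' hx]; exact hf.2 x hx
  · rw [hg' hx]; exact hg.2 x hx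

end Matching

namespace LPP

variable {m r : ℕ} (P : LPP m r)

/- The endpoints extended to all indices `n : ℕ`: past `r` they lie beyond the ground set with
`hi n < lo n`, so that `P.seg n = ∅` there while `lo` and `hi` stay strictly monotone. -/
def lo (n : ℕ) : ℕ := if h : n < r then P.l ⟨n, h⟩ else m + r + 1 + n

def hi (n : ℕ) : ℕ := if h : n < r then P.g ⟨n, h⟩ else m + r + n

def seg (n : ℕ) : Set ℕ := Icc (P.lo n) (P.hi n)

variable {P}

theorem lo_of_lt {n : ℕ} (h : n < r) : P.lo n = P.l ⟨n, h⟩ := dif_pos h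

theorem hi_of_lt {n : ℕ} (h : n < r) : P.hi n = P.g ⟨n, h⟩ := dif_pos h

theorem seg_of_lt {n : ℕ} (h : n < r) : P.seg n = P.N ⟨n, h⟩ := by
  rw [seg, N, lo_of_lt h, hi_of_lt h]

theorem lo_le_hi {n : ℕ} (h : n < r) : P.lo n ≤ P.hi n := by
  rw [lo_of_lt h, hi_of_lt h]; exact P.l_le_g _

theorem hi_le {n : ℕ} (h : n < r) : P.hi n ≤ m + r := by
  rw [hi_of_lt h]; exact P.g_le _

theorem one_le_lo (n : ℕ) : 1 ≤ P.lo n := by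
  unfold lo; split_ifs
  · exact P.one_le_l _
  · omega

theorem lo_of_le {n : ℕ} (h : r ≤ n) : P.lo n = m + r + 1 + n := dif_neg (by omega)

theorem hi_of_le {n : ℕ} (h : r ≤ n) : P.hi n = m + r + n := dif_neg (by omega)

theorem lt_lo_of_le {n : ℕ} (h : r ≤ n) : m + r < P.lo n := by
  rw [lo_of_le h]; omega

theorem lt_of_mem_seg {x n : ℕ} (hx : x ∈ P.seg n) : n < r := by
  by_contra h
  have := hx.1.trans hx.2
  rw [lo_of_le (not_lt.1 h), hi_of_le (not_lt.1 h)] at this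
  omega

theorem lo_mem_seg {n : ℕ} (h : n < r) : P.lo n ∈ P.seg n := ⟨le_rfl, lo_le_hi h⟩

theorem hi_mem_seg {n : ℕ} (h : n < r) : P.hi n ∈ P.seg n := ⟨lo_le_hi h, le_rfl⟩

theorem lo_strictMono : StrictMono P.lo := by
  refine strictMono_nat_of_lt_succ fun n => ?_
  rcases lt_or_ge (n + 1) r with h | h
  · rw [lo_of_lt h, lo_of_lt (by omega : n < r)]
    exact P.l_strictMono (Fin.mk_lt_mk.2 n.lt_succ_self)
  · rcases lt_or_ge n r with h' | h'
    · exact ((lo_le_hi h').trans (hi_le h')).trans_lt (lt_lo_of_le h)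
    · rw [lo_of_le h, lo_of_le h']; omega

theorem hi_strictMono : StrictMono P.hi := by
  refine strictMono_nat_of_lt_succ fun n => ?_
  rcases lt_or_ge (n + 1) r with h | h
  · rw [hi_of_lt h, hi_of_lt (by omega : n < r)]
    exact P.g_strictMono (Fin.mk_lt_mk.2 n.lt_succ_self)
  · rw [hi_of_le h]
    rcases lt_or_ge n r with h' | h'
    · have := hi_le (P := P) h'; omega
    · rw [hi_of_le h']; omega

theorem isPT_iff_exists_isMatching {I : Set ℕ} : IsPT P.N I ↔ ∃ f, IsMatching P.seg I f := by
  classical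
  constructor
  · rintro ⟨f, hinj, hmem⟩
    refine ⟨fun x => if hx : x ∈ I then (f ⟨x, hx⟩ : ℕ) else 0, fun x hx y hy hxy => ?_,
      fun x hx => ?_⟩
    · simp only [dif_pos hx, dif_pos hy] at hxy
      exact congrArg Subtype.val (hinj (Fin.ext hxy))
    · dsimp only
      rw [dif_pos hx, seg_of_lt (f ⟨x, hx⟩).2]
      exact hmem ⟨x, hx⟩
  · rintro ⟨f, hinj, hmem⟩
    refine ⟨fun x => ⟨f x, lt_of_mem_seg (hmem x x.2)⟩, fun x y hxy => ?_, fun x => ?_⟩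
    · exact Subtype.ext (hinj x.2 y.2 (congrArg Fin.val hxy))
    · rw [← seg_of_lt]; exact hmem x x.2

theorem hi_mem_seg_succ (hov : ∀ n, n + 1 < r → P.lo (n + 1) ≤ P.hi n) {n : ℕ} (h : n + 1 < r) :
    P.hi n ∈ P.seg (n + 1) :=
  ⟨hov n h, hi_strictMono.monotone n.le_succ⟩

theorem lo_succ_mem_seg (hov : ∀ n, n + 1 < r → P.lo (n + 1) ≤ P.hi n) {n : ℕ} (h : n + 1 < r) :
    P.lo (n + 1) ∈ P.seg n :=
  ⟨lo_strictMono.monotone n.le_succ, hov n h⟩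

theorem forall_l_le_g_iff :
    (∀ i j : Fin r, (j : ℕ) = (i : ℕ) + 1 → P.l j ≤ P.g i) ↔
      ∀ n, n + 1 < r → P.lo (n + 1) ≤ P.hi n := by
  constructor
  · intro h n hn
    rw [lo_of_lt hn, hi_of_lt (by omega)]
    exact h _ _ rfl
  · rintro h i ⟨j, hj⟩ rfl
    have := h i hj
    rwa [lo_of_lt hj, hi_of_lt i.2] at this

end LPP

variable {m r : ℕ} {P : LPP m r} {M : Matroid ℕ}

theorem IsLPMOf.indep_iff (hM : IsLPMOf P M) {I : Set ℕ} :
    M.Indep I ↔ I ⊆ Icc 1 (m + r) ∧ ∃ f, IsMatching P.seg I f := by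
  rw [hM.2, LPP.isPT_iff_exists_isMatching]

theorem IsLPMOf.not_connected_of_cut (hM : IsLPMOf P M) {p q : ℕ} (hp : 1 ≤ p) (hpm : p < m + r)
    (hleft : ∀ i < q, P.hi i ≤ p) (hright : p < P.lo q) : ¬ Connected M := by
  intro hconn
  obtain ⟨C, ⟨hCE, hCdep, hCmin⟩, hpC, hmC⟩ :=
    hconn p (hM.1 ▸ ⟨hp, hpm.le⟩) (m + r) (hM.1 ▸ ⟨by omega, le_rfl⟩) hpm.ne
  have hleftC : M.Indep (C ∩ Iic p) :=
    hCmin _ ((ssubset_iff_of_subset inter_subset_left).2 ⟨m + r, hmC, fun h => hpm.not_ge h.2⟩)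
  have hrightC : M.Indep (C \ Iic p) :=
    hCmin _ ((ssubset_iff_of_subset sdiff_subset).2 ⟨p, hpC, fun h => h.2 (mem_Iic.2 le_rfl)⟩)
  obtain ⟨-, f, hf⟩ := hM.indep_iff.1 hleftC
  obtain ⟨-, g, hg⟩ := hM.indep_iff.1 hrightC
  refine hCdep (hM.indep_iff.2 ⟨hM.1 ▸ hCE, _, hf.piecewise hg fun x hx y hy hxy => ?_⟩)
  have hfx := hf.2 x hx
  have hgy := hg.2 y hy
  rw [hxy] at hfx
  have hx' : x ≤ p := hx.2
  have hy' : ¬ y ≤ p := hy.2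
  by_cases hq : g y < q
  · have := hleft _ hq; have := hgy.2; omega
  · have := hright.trans_le (LPP.lo_strictMono.monotone (not_lt.1 hq)); have := hfx.1; omega

open LPP in
theorem IsLPMOf.overlap_of_connected (hM : IsLPMOf P M) (hr : 0 < r) (hconn : Connected M) :
    P.lo 0 = 1 ∧ P.hi (r - 1) = m + r ∧ ∀ n, n + 1 < r → P.lo (n + 1) ≤ P.hi n := by
  refine ⟨?_, ?_, fun n hn => ?_⟩
  · by_contra h
    have := one_le_lo (P := P) 0
    have := (lo_le_hi (P := P) hr).trans (hi_le hr)
    exact hM.not_connected_of_cut (p := P.lo 0 - 1) (q := 0) (by omega) (by omega)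
      (fun i hi => absurd hi (Nat.not_lt_zero i)) (by omega) hconn
  · by_contra h
    have hlast : r - 1 < r := by omega
    have := (one_le_lo (P := P) (r - 1)).trans (lo_le_hi hlast)
    have := hi_le (P := P) hlast
    exact hM.not_connected_of_cut (p := P.hi (r - 1)) (q := r) (by omega) (by omega)
      (fun i hi => hi_strictMono.monotone (by omega)) ((hi_le hlast).trans_lt (lt_lo_of_le le_rfl))
      hconn
  · by_contra h
    have := (one_le_lo (P := P) n).trans (lo_le_hi (by omega))
    have := (lo_le_hi (P := P) hn).trans (hi_le hn)
    exact hM.not_connected_of_cut (p := P.hi n) (q := n + 1) (by omega) (by omega)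
      (fun i hi => hi_strictMono.monotone (by omega)) (not_le.1 h) hconn

namespace LPP

/- `P.Chain a b C c`: `C = {c₀ < c₁ < ⋯ < c}`, where `c₀ ≥ 1` lies beyond the intervals of index
`< a` and consecutive elements lie in `P.seg a, …, P.seg (b - 1)` in turn. -/
inductive Chain (P : LPP m r) (a : ℕ) : ℕ → Finset ℕ → ℕ → Prop
  | start {c₀ : ℕ} : 1 ≤ c₀ → (∀ i < a, P.hi i < c₀) → P.Chain a a {c₀} c₀
  | snoc {b : ℕ} {C : Finset ℕ} {c d : ℕ} : P.Chain a b C c → c < d → c ∈ P.seg b →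
      d ∈ P.seg b → P.Chain a (b + 1) (insert d C) d

variable {a b c : ℕ} {C : Finset ℕ}

namespace Chain

theorem last_mem (hC : P.Chain a b C c) : c ∈ C := by
  cases hC with
  | start => exact Finset.mem_singleton_self _
  | snoc => exact Finset.mem_insert_self _ _

theorem le_last (hC : P.Chain a b C c) : ∀ z ∈ C, z ≤ c := by
  induction hC with
  | start => simp
  | snoc _ hcd _ _ ih =>
    intro z hz
    rcases Finset.mem_insert.1 hz with rfl | hz
    · exact le_rfl
    · exact (ih z hz).trans hcd.le

theorem lower_bound (hC : P.Chain a b C c) : ∀ z ∈ C, 1 ≤ z ∧ ∀ i < a, P.hi i < z := by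
  induction hC with
  | start h₁ hlow => simpa using ⟨h₁, hlow⟩
  | snoc hC hcd _ _ ih =>
    intro z hz
    rcases Finset.mem_insert.1 hz with rfl | hz
    · obtain ⟨h₁, hlow⟩ := ih _ hC.last_mem
      exact ⟨h₁.trans hcd.le, fun i hi => (hlow i hi).trans hcd⟩
    · exact ih z hz

theorem card_add (hC : P.Chain a b C c) : C.card + a = b + 1 := by
  induction hC with
  | start => simp [add_comm]
  | snoc hC hcd _ _ ih =>
    rw [Finset.card_insert_of_notMem fun hd => (hC.le_last _ hd).not_gt hcd]
    omega

theorem le (hC : P.Chain a b C c) : a ≤ b := by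
  have := hC.card_add; have := Finset.card_pos.2 ⟨c, hC.last_mem⟩; omega

theorem exists_isMatching_erase (hC : P.Chain a b C c) :
    ∀ z ∈ C, ∃ f, IsMatching P.seg ↑(C.erase z) f ∧ MapsTo f ↑(C.erase z) (Iio b) := by
  induction hC with
  | start =>
    intro z hz
    rw [Finset.mem_singleton.1 hz, Finset.erase_singleton]
    exact ⟨id, by simp [IsMatching], by rw [Finset.coe_empty]; exact mapsTo_empty _ _⟩
  | @snoc b C c d hC hcd hcb hdb ih =>
    have hdC : d ∉ C := fun hd => (hC.le_last _ hd).not_gt hcd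
    have hb : b ∉ Iio b := lt_irrefl b
    have hIio : insert b (Iio b) ⊆ Iio (b + 1) :=
      insert_subset_iff.2 ⟨b.lt_succ_self, fun i hi => Nat.lt_succ_of_lt hi⟩
    intro z hz
    rcases Finset.mem_insert.1 hz with rfl | hz
    · obtain ⟨f, hf, hfS⟩ := ih c hC.last_mem
      obtain ⟨hins, hinsS⟩ := hf.insert hfS (by simp) hb hcb
      rw [Finset.erase_insert hdC, ← Finset.insert_erase hC.last_mem, Finset.coe_insert]
      exact ⟨_, hins, hinsS.mono_right hIio⟩
    · obtain ⟨f, hf, hfS⟩ := ih z hz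
      obtain ⟨hins, hinsS⟩ := hf.insert hfS (fun h => hdC (Finset.mem_of_mem_erase h)) hb hdb
      rw [Finset.erase_insert_of_ne (ne_of_mem_of_not_mem hz hdC).symm, Finset.coe_insert]
      exact ⟨_, hins, hinsS.mono_right hIio⟩

theorem circuit (hM : IsLPMOf P M) (hC : P.Chain a b C c) (hc : c ≤ m + r)
    (hcb : c < P.lo b) : Circuit M C := by
  have hsub : (C : Set ℕ) ⊆ Icc 1 (m + r) := fun z hz =>
    ⟨(hC.lower_bound z hz).1, (hC.le_last z hz).trans hc⟩
  refine ⟨hM.1 ▸ hsub, fun hind => ?_, fun D hD => ?_⟩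
  · obtain ⟨-, f, hinj, hmem⟩ := hM.indep_iff.1 hind
    have hmaps : MapsTo f C (Finset.Ico a b) := by
      intro z hz
      have hzf := hmem z hz
      refine Finset.mem_Ico.2 ⟨not_lt.1 fun ha => ?_, not_le.1 fun hb => ?_⟩
      · exact ((hC.lower_bound z hz).2 _ ha).not_ge hzf.2
      · exact (hcb.trans_le (lo_strictMono.monotone hb)).not_ge ((hC.le_last z hz).trans' hzf.1)
    have hcard := Finset.card_le_card_of_injOn f hmaps hinj
    rw [Nat.card_Ico] at hcard
    have := hC.card_add
    have := hC.le
    omega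
  · obtain ⟨z, hzC, hzD⟩ := exists_of_ssubset hD
    have hDz : D ⊆ ↑(C.erase z) := fun w hw => by
      simpa [Finset.coe_erase] using ⟨hD.subset hw, ne_of_mem_of_not_mem hw hzD⟩
    obtain ⟨f, hf, -⟩ := hC.exists_isMatching_erase z hzC
    exact hM.indep_iff.2 ⟨hD.subset.trans hsub, f, hf.mono hDz⟩

end Chain

theorem exists_chain_lo (hov : ∀ n, n + 1 < r → P.lo (n + 1) ≤ P.hi n) :
    ∀ n < r, ∃ C, P.Chain 0 n C (P.lo n)
  | 0, _ => ⟨_, .start (one_le_lo 0) fun _ h => absurd h (Nat.not_lt_zero _)⟩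
  | n + 1, h => by
    obtain ⟨C, hC⟩ := exists_chain_lo hov n (by omega)
    exact ⟨_, hC.snoc (lo_strictMono n.lt_succ_self) (lo_mem_seg (by omega))
      (lo_succ_mem_seg hov h)⟩

theorem Chain.exists_extend_hi (hov : ∀ n, n + 1 < r → P.lo (n + 1) ≤ P.hi n)
    (hC : P.Chain a b C c) (hcb : c ∈ P.seg b) (hc : c < P.hi b) :
    ∀ k, b + k < r → ∃ C', C ⊆ C' ∧ P.Chain a (b + k + 1) C' (P.hi (b + k))
  | 0, h => ⟨_, Finset.subset_insert _ _, hC.snoc hc hcb (hi_mem_seg h)⟩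
  | k + 1, h => by
    obtain ⟨C', hCC', hC'⟩ := hC.exists_extend_hi hov hcb hc k (by omega)
    exact ⟨_, hCC'.trans (Finset.subset_insert _ _),
      hC'.snoc (hi_strictMono (by omega)) (hi_mem_seg_succ hov h) (hi_mem_seg h)⟩

theorem Chain.exists_circuit (hM : IsLPMOf P M) (hov : ∀ n, n + 1 < r → P.lo (n + 1) ≤ P.hi n)
    (hC : P.Chain a (b + 1) C c) (hcb : c ∈ P.seg b) : ∃ C', C ⊆ C' ∧ Circuit M C' := by
  have hbr := lt_of_mem_seg hcb
  have hcm : c ≤ m + r := hcb.2.trans (hi_le hbr)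
  by_cases hclo : c < P.lo (b + 1)
  · exact ⟨C, subset_rfl, hC.circuit hM hcm hclo⟩
  have hb : b + 1 < r := not_le.1 fun h => hclo (hcm.trans_lt (lt_lo_of_le h))
  have hchi : c < P.hi (b + 1) := hcb.2.trans_lt (hi_strictMono b.lt_succ_self)
  obtain ⟨k, hk⟩ : ∃ k, r = b + 1 + k + 1 := ⟨r - (b + 2), by omega⟩
  obtain ⟨C', hCC', hC'⟩ :=
    hC.exists_extend_hi hov ⟨not_lt.1 hclo, hchi.le⟩ hchi k (by omega)
  have hlast : P.hi (b + 1 + k) ≤ m + r := hi_le (by omega)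
  exact ⟨C', hCC', hC'.circuit hM hlast (hlast.trans_lt (lt_lo_of_le hk.le))⟩

theorem exists_first_mem_seg (h0 : P.lo 0 = 1) (hlast : P.hi (r - 1) = m + r)
    (hov : ∀ n, n + 1 < r → P.lo (n + 1) ≤ P.hi n) {x : ℕ} (hx : 1 ≤ x) (hxm : x ≤ m + r) :
    ∃ s, x ∈ P.seg s ∧ ∀ i < s, P.hi i < x := by
  have hex : ∃ n, x ≤ P.hi n := ⟨r - 1, hlast ▸ hxm⟩
  obtain ⟨s, hxs, hmin⟩ : ∃ s, x ≤ P.hi s ∧ ∀ i < s, P.hi i < x :=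
    ⟨Nat.find hex, Nat.find_spec hex, fun i hi => not_le.1 (Nat.find_min hex hi)⟩
  have hsr : s ≤ r - 1 := not_lt.1 fun h => (hmin _ h).not_ge (hlast ▸ hxm)
  refine ⟨s, ⟨?_, hxs⟩, hmin⟩
  cases s with
  | zero => rw [h0]; exact hx
  | succ n => exact (hov n (by omega)).trans (hmin n n.lt_succ_self).le

theorem exists_chain_ending_at (h0 : P.lo 0 = 1) (hlast : P.hi (r - 1) = m + r)
    (hov : ∀ n, n + 1 < r → P.lo (n + 1) ≤ P.hi n) {x y v : ℕ} (hx : 1 ≤ x) (hxy : x < y)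
    (hyv : y ≤ P.hi v) (hv : v < r) :
    ∃ a u C, P.Chain a u C x ∧ x ∈ P.seg u ∧ x < P.hi u ∧ u ≤ v := by
  obtain ⟨s, hxs, hmin⟩ :=
    exists_first_mem_seg h0 hlast hov hx (hxy.le.trans (hyv.trans (hi_le hv)))
  have hsv : s ≤ v := not_lt.1 fun h => (hmin v h).not_ge (hxy.le.trans hyv)
  rcases hxs.2.lt_or_eq with hlt | heq
  · exact ⟨s, s, {x}, .start hx hmin, hxs, hlt, hsv⟩
  -- `x = P.hi s` cannot start a chain at `s`: start from `P.lo 0, …, P.lo s` instead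
  have hsv' : s < v := hsv.lt_of_ne fun h => by subst h; omega
  have hxs' : x ∈ P.seg (s + 1) := heq ▸ hi_mem_seg_succ hov (by omega)
  have hlo : P.lo s < x := hxs.1.lt_of_ne fun h => by
    have := lo_strictMono (P := P) (Nat.lt_add_one s); have := hxs'.1; omega
  obtain ⟨C, hC⟩ := exists_chain_lo hov s (by omega)
  exact ⟨0, s + 1, _, hC.snoc hlo (lo_mem_seg (by omega)) hxs, hxs',
    heq ▸ hi_strictMono s.lt_succ_self, hsv'⟩

end LPP

open LPP in
theorem IsLPMOf.exists_circuit_of_lt (hM : IsLPMOf P M) (h0 : P.lo 0 = 1)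
    (hlast : P.hi (r - 1) = m + r) (hov : ∀ n, n + 1 < r → P.lo (n + 1) ≤ P.hi n) {x y : ℕ}
    (hx : 1 ≤ x) (hxy : x < y) (hy : y ≤ m + r) : ∃ C, Circuit M C ∧ x ∈ C ∧ y ∈ C := by
  obtain ⟨v, hyv, hmin⟩ := exists_first_mem_seg h0 hlast hov (hx.trans hxy.le) hy
  have hv := lt_of_mem_seg hyv
  obtain ⟨a, u, C, hC, hxu, hxhi, huv⟩ := exists_chain_ending_at h0 hlast hov hx hxy hyv.2 hv
  obtain ⟨C', hCC', hC'⟩ : ∃ C', C ⊆ C' ∧ P.Chain a (v + 1) C' y := by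
    rcases huv.lt_or_eq with huv | rfl
    · obtain ⟨k, rfl⟩ : ∃ k, v = u + k + 1 := ⟨v - u - 1, by omega⟩
      obtain ⟨C₁, hCC₁, hC₁⟩ := hC.exists_extend_hi hov hxu hxhi k (by omega)
      exact ⟨_, hCC₁.trans (Finset.subset_insert _ _),
        hC₁.snoc (hmin _ (by omega)) (hi_mem_seg_succ hov hv) hyv⟩
    · exact ⟨_, Finset.subset_insert _ _, hC.snoc hxy hxu hyv⟩
  obtain ⟨D, hC'D, hD⟩ := hC'.exists_circuit hM hov hyv
  exact ⟨D, hD, Finset.mem_coe.2 (hC'D (hCC' hC.last_mem)), Finset.mem_coe.2 (hC'D hC'.last_mem)⟩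

theorem IsLPMOf.connected_of_overlap (hM : IsLPMOf P M) (h0 : P.lo 0 = 1)
    (hlast : P.hi (r - 1) = m + r) (hov : ∀ n, n + 1 < r → P.lo (n + 1) ≤ P.hi n) :
    Connected M := by
  intro x hx y hy hxy
  rw [hM.1] at hx hy
  rcases hxy.lt_or_gt with h | h
  · exact hM.exists_circuit_of_lt h0 hlast hov hx.1 h hy.2
  · obtain ⟨C, hC, hyC, hxC⟩ := hM.exists_circuit_of_lt h0 hlast hov hy.1 h hx.2
    exact ⟨C, hC, hxC, hyC⟩

end LPM

open LPM in
/-- The lattice path matroid `M[N]` (with `m, r ≥ 1`) is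
connected iff `l 1 = 1`, `g r = m + r`, and `l (i+1) ≤ g i` for `1 ≤ i < r`. -/
theorem stmt8 {m r : ℕ} (hr : 1 ≤ r) (P : LPP m r)
    (M : Matroid ℕ) (hM : IsLPMOf P M) :
    Connected M ↔
      (P.l ⟨0, by omega⟩ = 1 ∧ P.g ⟨r - 1, by omega⟩ = m + r ∧
        ∀ i j : Fin r, (j : ℕ) = (i : ℕ) + 1 → P.l j ≤ P.g i) := by
  rw [← LPP.lo_of_lt, ← LPP.hi_of_lt, LPP.forall_l_le_g_iff]
  exact ⟨hM.overlap_of_connected hr, fun ⟨h0, hlast, hov⟩ => hM.connected_of_overlap h0 hlast hov⟩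
end

section
/- Let (D_1,…,D_s) be a finite family of subsets of a finite set E, let M be the transversal matroid on E presented by this family, and let n(X) = {i : X ∩ D_i ≠ ∅} for X ⊆ E. If C is a circuit of M with r(C) = k (so |C| = k + 1), then |n(C)| = k, and moreover |n(C − x)| = k for every x ∈ C. -/
/-!
A partial transversal `I` injects into the set `n(I)` of indices of members meeting it, so
`|I| ≤ |n(I)|`. A circuit `C` is not a partial transversal, so by Hall's theorem for the
finitely many members some finite `S ⊆ C` has `|n(S)| < |S|`; as proper subsets of `C` are
partial transversals, `S = C`. Hence, for `x ∈ C`,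
`|C| - 1 = |C - x| ≤ |n(C - x)| ≤ |n(C)| < |C|`, and `|C| - 1 = r(C)`.
-/

open Set
open scoped Matroid

namespace LPM

variable {α ι : Type*}

/-- The paper's `n(X)`. -/
def indicesMeeting (N : ι → Set α) (X : Set α) : Set ι := {i | (X ∩ N i).Nonempty}

variable {N : ι → Set α} {X Y : Set α}

theorem indicesMeeting_mono (h : X ⊆ Y) : indicesMeeting N X ⊆ indicesMeeting N Y :=
  fun _ ⟨x, hxX, hxN⟩ => ⟨x, h hxX, hxN⟩

theorem IsPT.ncard_le_ncard_indicesMeeting [Finite ι] (h : IsPT N X) :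
    X.ncard ≤ (indicesMeeting N X).ncard := by
  obtain ⟨f, hf, hfN⟩ := h
  rw [← Nat.card_coe_set_eq, ← Nat.card_coe_set_eq]
  exact Nat.card_le_card_of_injective (fun x => ⟨f x, x, x.2, hfN x⟩)
    fun x y hxy => hf (congrArg Subtype.val hxy)

theorem exists_ncard_indicesMeeting_lt_of_not_isPT [Finite ι] (h : ¬ IsPT N X) :
    ∃ S ⊆ X, (indicesMeeting N S).ncard < S.ncard := by
  classical
  have := Fintype.ofFinite ι
  obtain ⟨A, hA⟩ : ∃ A : Finset X, ({i | ∃ a ∈ A, (a : α) ∈ N i} : Finset ι).card < A.card := by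
    by_contra! hall
    exact h ((Fintype.all_card_le_filter_rel_iff_exists_injective _).1 hall)
  refine ⟨Subtype.val '' (A : Set X), image_subset_iff.2 fun x _ => x.2, ?_⟩
  rw [ncard_image_of_injective _ Subtype.val_injective, ncard_coe_finset]
  refine lt_of_le_of_lt ?_ hA
  rw [← ncard_coe_finset]
  refine ncard_le_ncard ?_
  rintro i ⟨_, ⟨a, ha, rfl⟩, hai⟩
  simpa using ⟨a.1, ⟨a.2, ha⟩, hai⟩

theorem ncard_indicesMeeting_lt_of_minimal_not_isPT [Finite ι] (hX : ¬ IsPT N X)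
    (hsub : ∀ S ⊂ X, IsPT N S) : (indicesMeeting N X).ncard < X.ncard := by
  obtain ⟨S, hSX, hS⟩ := exists_ncard_indicesMeeting_lt_of_not_isPT hX
  obtain rfl | hSX := hSX.eq_or_ssubset
  · exact hS
  · exact absurd (hsub S hSX).ncard_le_ncard_indicesMeeting hS.not_ge

theorem ncard_indicesMeeting_of_minimal_not_isPT [Finite ι] (hX : ¬ IsPT N X)
    (hsub : ∀ S ⊂ X, IsPT N S) {x : α} (hx : x ∈ X) :
    (indicesMeeting N (X \ {x})).ncard = X.ncard - 1 ∧
      (indicesMeeting N X).ncard = X.ncard - 1 := by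
  have hlt := ncard_indicesMeeting_lt_of_minimal_not_isPT hX hsub
  have hle := (hsub _ (sdiff_singleton_ssubset.2 hx)).ncard_le_ncard_indicesMeeting
  have hmono := ncard_le_ncard (indicesMeeting_mono (N := N) (sdiff_subset : X \ {x} ⊆ X))
  rw [ncard_sdiff_singleton_of_mem hx] at hle
  omega

theorem Circuit.rk_eq_ncard_sub_one {M : Matroid α} {C : Set α} (hC : Circuit M C)
    (hCfin : C.Finite) : rk M C = C.ncard - 1 := by
  obtain ⟨x, hx⟩ : C.Nonempty := nonempty_iff_ne_empty.2 fun h => hC.2.1 (h ▸ M.empty_indep)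
  refine IsGreatest.csSup_eq ⟨⟨C \ {x}, sdiff_subset, hC.2.2 _ (sdiff_singleton_ssubset.2 hx),
    ncard_sdiff_singleton_of_mem hx⟩, ?_⟩
  rintro _ ⟨I, hIC, hI, rfl⟩
  have := ncard_lt_ncard (hIC.ssubset_of_ne fun h => hC.2.1 (h ▸ hI)) hCfin
  omega

end LPM

open LPM in
theorem stmt10_general {α : Type*} {s : ℕ} (E : Set α)
    (D : Fin s → Set α)
    (M : Matroid α) (hME : M.E = E)
    (hMI : ∀ I : Set α, M.Indep I ↔ I ⊆ E ∧ IsPT D I)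
    (C : Set α) (hC : Circuit M C) (k : ℕ) (hk : rk M C = k) :
    {i : Fin s | (C ∩ D i).Nonempty}.ncard = k ∧
      ∀ x ∈ C, {i : Fin s | ((C \ {x}) ∩ D i).Nonempty}.ncard = k := by
  have hsubPT : ∀ S ⊂ C, IsPT D S := fun S hS => ((hMI S).1 (hC.2.2 S hS)).2
  have hnotPT : ¬ IsPT D C := fun h => hC.2.1 ((hMI C).2 ⟨hME ▸ hC.1, h⟩)
  have hCpos : 0 < C.ncard :=
    Nat.zero_lt_of_lt (ncard_indicesMeeting_lt_of_minimal_not_isPT hnotPT hsubPT)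
  obtain rfl : C.ncard - 1 = k := hk ▸ (hC.rk_eq_ncard_sub_one (finite_of_ncard_pos hCpos)).symm
  obtain ⟨x, hx⟩ := nonempty_of_ncard_ne_zero hCpos.ne'
  exact ⟨(ncard_indicesMeeting_of_minimal_not_isPT hnotPT hsubPT hx).2,
    fun y hy => (ncard_indicesMeeting_of_minimal_not_isPT hnotPT hsubPT hy).1⟩

open LPM in
/-- If `C` is a circuit of rank `k` of the transversal matroid
presented by `(D 0, …, D (s-1))` on a finite set `E`, then `|n(C)| = k` and
`|n(C − x)| = k` for every `x ∈ C`, where `n(X) = {i : X ∩ D i ≠ ∅}`. -/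
theorem stmt10 {α : Type*} {s : ℕ} (E : Set α) (hEfin : E.Finite)
    (D : Fin s → Set α) (hDE : ∀ i, D i ⊆ E)
    (M : Matroid α) (hME : M.E = E)
    (hMI : ∀ I : Set α, M.Indep I ↔ I ⊆ E ∧ IsPT D I)
    (C : Set α) (hC : Circuit M C) (k : ℕ) (hk : rk M C = k) :
    {i : Fin s | (C ∩ D i).Nonempty}.ncard = k ∧
      ∀ x ∈ C, {i : Fin s | ((C \ {x}) ∩ D i).Nonempty}.ncard = k :=
  stmt10_general E D M hME hMI C hC k hk
end
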